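/- arXiv:1206.5705 — 8 statements merged into one kernel-verified Lean document; each statement's English description precedes it below -/
import Mathlib

section
/- Let H be a real Hilbert space, α ∈ ]0,+∞[, let (ηₙ) be a summable sequence in [0,+∞[, and let (Wₙ) be a sequence of bounded self-adjoint operators on H with Wₙ ≽ α·Id for all n and sup_n ‖Wₙ‖ < +∞. Suppose (1+ηₙ)Wₙ ≽ Wₙ₊₁ for all n. Then there exists a bounded self-adjoint operator W with W ≽ α·Id such that Wₙx → Wx (strongly) for every x ∈ H. -/
/-!
Rescaling by the partial products `P n = ∏_{k<n} (1 + η k)` turns the quasi-monotone sequence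
into a genuinely decreasing one: `V n = (P n)⁻¹ • W n` is antitone in the Loewner order and
positive. For `m ≤ n` the operator `A = V m - V n` satisfies `0 ≤ A ≤ V 0`, so Cauchy–Schwarz for
the form `⟪A ·, ·⟫` gives `‖A x‖² ≤ ‖V 0‖ ⟪A x, x⟫ = ‖V 0‖ (⟪V m x, x⟫ - ⟪V n x, x⟫)`; the
decreasing quadratic forms converge, hence `V n x` is Cauchy. As `η` is summable, `P n`
converges, so `W n x = P n • V n x` converges too. Banach–Steinhaus makes the pointwise limit a bounded
operator, and self-adjointness and the lower bound `α` pass to the limit.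
-/

open Filter Topology
open scoped InnerProductSpace

namespace ContinuousLinearMap

section Real

variable {H : Type*} [NormedAddCommGroup H] [InnerProductSpace ℝ H]

theorem IsPositive.inner_apply_sq_le {A : H →L[ℝ] H} (hA : A.IsPositive) (x y : H) :
    ⟪A x, y⟫_ℝ ^ 2 ≤ ⟪A x, x⟫_ℝ * ⟪A y, y⟫_ℝ := by
  have hsymm : ⟪A y, x⟫_ℝ = ⟪A x, y⟫_ℝ := by
    rw [hA.inner_left_eq_inner_right, real_inner_comm]
  simpa [sq, hsymm] using
    LinearMap.BilinForm.apply_mul_apply_le_of_forall_zero_le (innerₗ H ∘ₗ (A : H →ₗ[ℝ] H))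
      hA.inner_nonneg_left x y

theorem norm_apply_sq_le_of_le {A B : H →L[ℝ] H} (hA : 0 ≤ A) (hAB : A ≤ B) (x : H) :
    ‖A x‖ ^ 2 ≤ ‖B‖ * ⟪A x, x⟫_ℝ := by
  rw [nonneg_iff_isPositive] at hA
  set y := A x
  have hAx : 0 ≤ ⟪A x, x⟫_ℝ := hA.inner_nonneg_left x
  have hAy : ⟪A y, y⟫_ℝ ≤ ‖B‖ * ‖y‖ ^ 2 := calc
    ⟪A y, y⟫_ℝ ≤ ⟪B y, y⟫_ℝ := by
      simpa [inner_sub_left] using ((le_def A B).1 hAB).inner_nonneg_left y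
    _ ≤ ‖B y‖ * ‖y‖ := real_inner_le_norm _ _
    _ ≤ ‖B‖ * ‖y‖ ^ 2 := by nlinarith [B.le_opNorm y, norm_nonneg y]
  have hcs : (‖y‖ ^ 2) ^ 2 ≤ ⟪A x, x⟫_ℝ * (‖B‖ * ‖y‖ ^ 2) := by
    simpa [y, real_inner_self_eq_norm_sq] using
      (hA.inner_apply_sq_le x y).trans (mul_le_mul_of_nonneg_left hAy hAx)
  rcases (norm_nonneg y).eq_or_lt with hy | hy
  · rw [← hy, sq, zero_mul]
    exact mul_nonneg (norm_nonneg B) hAx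
  · nlinarith [pow_pos hy 2]

theorem cauchySeq_apply_of_antitone {V : ℕ → H →L[ℝ] H} (hV : Antitone V) (hV0 : ∀ n, 0 ≤ V n)
    (x : H) : CauchySeq fun n => V n x := by
  set q : ℕ → ℝ := fun n => ⟪V n x, x⟫_ℝ
  have hdiff : ∀ m n, ⟪(V m - V n) x, x⟫_ℝ = q m - q n := fun m n => by
    simp [q, inner_sub_left]
  have hq : Antitone q := fun m n hmn => by
    have h := ((le_def _ _).1 (hV hmn)).inner_nonneg_left x
    rw [hdiff] at h
    linarith
  have hq0 : ∀ n, 0 ≤ q n := fun n => ((nonneg_iff_isPositive _).1 (hV0 n)).inner_nonneg_left x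
  obtain ⟨L, hqL⟩ : ∃ L, Tendsto q atTop (𝓝 L) := ⟨_, tendsto_atTop_ciInf hq ⟨0, by
    rintro _ ⟨n, rfl⟩; exact hq0 n⟩⟩
  have hLq : ∀ n, L ≤ q n := hq.le_of_tendsto hqL
  refine cauchySeq_of_le_tendsto_0' (fun n => √(‖V 0‖ * (q n - L))) (fun m n hmn => ?_) ?_
  · have hpos : 0 ≤ V m - V n := (nonneg_iff_isPositive _).2 ((le_def _ _).1 (hV hmn))
    have hle : V m - V n ≤ V 0 := by
      rw [le_def, show V 0 - (V m - V n) = (V 0 - V m) + V n by abel]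
      exact ((le_def _ _).1 (hV m.zero_le)).add ((nonneg_iff_isPositive _).1 (hV0 n))
    rw [dist_eq_norm, ← sub_apply,
      Real.le_sqrt (norm_nonneg _) (mul_nonneg (norm_nonneg _) (sub_nonneg.2 (hLq m)))]
    calc ‖(V m - V n) x‖ ^ 2 ≤ ‖V 0‖ * ⟪(V m - V n) x, x⟫_ℝ := norm_apply_sq_le_of_le hpos hle x
      _ ≤ ‖V 0‖ * (q m - L) := by rw [hdiff]; gcongr; linarith [hLq n]
  · simpa using ((hqL.sub_const L).const_mul ‖V 0‖).sqrt

theorem le_iff_forall_inner_apply_le [CompleteSpace H] {A B : H →L[ℝ] H} (hA : IsSelfAdjoint A)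
    (hB : IsSelfAdjoint B) : A ≤ B ↔ ∀ x, ⟪A x, x⟫_ℝ ≤ ⟪B x, x⟫_ℝ := by
  simp [le_def, isPositive_iff', hB.sub hA, inner_sub_left]

theorem antitone_inv_prod_smul {W : ℕ → H →L[ℝ] H} {c : ℕ → ℝ} (hc : ∀ n, 0 < c n)
    (hW : ∀ n, W (n + 1) ≤ c n • W n) :
    Antitone fun n => (∏ k ∈ Finset.range n, c k)⁻¹ • W n := by
  refine antitone_nat_of_succ_le fun n => ?_
  set P := ∏ k ∈ Finset.range n, c k
  have hP : 0 < P := Finset.prod_pos fun k _ => hc k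
  have hsplit : P⁻¹ • W n - (∏ k ∈ Finset.range (n + 1), c k)⁻¹ • W (n + 1) =
      (P * c n)⁻¹ • (c n • W n - W (n + 1)) := by
    rw [Finset.prod_range_succ, smul_sub, smul_smul, mul_inv, mul_assoc,
      inv_mul_cancel₀ (hc n).ne', mul_one]
  rw [le_def, hsplit]
  exact ((le_def _ _).1 (hW n)).smul_of_nonneg (inv_nonneg.2 (mul_pos hP (hc n)).le)

end Real

theorem isSelfAdjoint_of_tendsto_apply {𝕜 E ι : Type*} [RCLike 𝕜] [NormedAddCommGroup E]
    [InnerProductSpace 𝕜 E] [CompleteSpace E] {l : Filter ι} [l.NeBot] {W : ι → E →L[𝕜] E}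
    {T : E →L[𝕜] E} (hW : ∀ i, IsSelfAdjoint (W i))
    (hT : ∀ x, Tendsto (fun i => W i x) l (𝓝 (T x))) : IsSelfAdjoint T := by
  rw [isSelfAdjoint_iff_isSymmetric]
  intro x y
  refine tendsto_nhds_unique ((hT x).inner tendsto_const_nhds) ?_
  exact (tendsto_const_nhds.inner (hT y)).congr fun i => ((hW i).isSymmetric x y).symm

end ContinuousLinearMap

open ContinuousLinearMap in
theorem stmt_3_general {H : Type*} [NormedAddCommGroup H] [InnerProductSpace ℝ H] [CompleteSpace H]
    (α : ℝ) (hα : 0 < α)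
    (η : ℕ → ℝ) (hη0 : ∀ n, 0 ≤ η n) (hη : Summable η)
    (W : ℕ → H →L[ℝ] H) (hsa : ∀ n, IsSelfAdjoint (W n))
    (hlb : ∀ n (x : H), α * ‖x‖ ^ 2 ≤ (inner ℝ (W n x) x : ℝ))
    (hmono : ∀ n (x : H), (inner ℝ (W (n + 1) x) x : ℝ) ≤ (1 + η n) * (inner ℝ (W n x) x : ℝ)) :
    ∃ Wl : H →L[ℝ] H, IsSelfAdjoint Wl ∧ (∀ x : H, α * ‖x‖ ^ 2 ≤ (inner ℝ (Wl x) x : ℝ)) ∧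
      ∀ x : H, Tendsto (fun n => W n x) atTop (𝓝 (Wl x)) := by
  have hW0 : ∀ n, 0 ≤ W n := fun n => (le_iff_forall_inner_apply_le (.zero _) (hsa n)).2 fun x => by
    simpa using (by positivity : 0 ≤ α * ‖x‖ ^ 2).trans (hlb n x)
  have hstep : ∀ n, W (n + 1) ≤ (1 + η n) • W n := fun n =>
    (le_iff_forall_inner_apply_le (hsa _) (.smul (star_trivial _) (hsa n))).2 fun x => by
      simpa [real_inner_smul_left] using hmono n x
  have hc : ∀ n, 0 < 1 + η n := fun n => by linarith [hη0 n]
  set P : ℕ → ℝ := fun n => ∏ k ∈ Finset.range n, (1 + η k)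
  have hP : ∀ n, 0 < P n := fun n => Finset.prod_pos fun k _ => hc k
  have hV0 : ∀ n, 0 ≤ (P n)⁻¹ • W n := fun n => (nonneg_iff_isPositive _).2 <|
    ((nonneg_iff_isPositive _).1 (hW0 n)).smul_of_nonneg (inv_nonneg.2 (hP n).le)
  have hPlim : Tendsto P atTop (𝓝 (∏' k, (1 + η k))) :=
    (Real.multipliable_one_add_of_summable hη).tendsto_prod_tprod_nat
  have hlim : ∀ x, ∃ y, Tendsto (fun n => W n x) atTop (𝓝 y) := fun x => by
    obtain ⟨v, hv⟩ := cauchySeq_tendsto_of_complete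
      (cauchySeq_apply_of_antitone (antitone_inv_prod_smul hc hstep) hV0 x)
    refine ⟨_, (hPlim.smul hv).congr fun n => ?_⟩
    exact smul_inv_smul₀ (hP n).ne' (W n x)
  choose f hf using hlim
  refine ⟨continuousLinearMapOfTendsto W (tendsto_pi_nhds.2 hf),
    isSelfAdjoint_of_tendsto_apply hsa hf, fun x => ?_, hf⟩
  exact ge_of_tendsto ((hf x).inner tendsto_const_nhds) (.of_forall (hlb · x))

theorem stmt_3 {H : Type*} [NormedAddCommGroup H] [InnerProductSpace ℝ H] [CompleteSpace H]
    (α : ℝ) (hα : 0 < α)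
    (η : ℕ → ℝ) (hη0 : ∀ n, 0 ≤ η n) (hη : Summable η)
    (W : ℕ → H →L[ℝ] H) (hsa : ∀ n, IsSelfAdjoint (W n))
    (hlb : ∀ n (x : H), α * ‖x‖ ^ 2 ≤ (inner ℝ (W n x) x : ℝ))
    (hbd : ∃ μ : ℝ, ∀ n, ‖W n‖ ≤ μ)
    (hmono : ∀ n (x : H), (inner ℝ (W (n + 1) x) x : ℝ) ≤ (1 + η n) * (inner ℝ (W n x) x : ℝ)) :
    ∃ Wl : H →L[ℝ] H, IsSelfAdjoint Wl ∧ (∀ x : H, α * ‖x‖ ^ 2 ≤ (inner ℝ (Wl x) x : ℝ)) ∧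
      ∀ x : H, Tendsto (fun n => W n x) atTop (𝓝 (Wl x)) :=
  stmt_3_general α hα η hη0 hη W hsa hlb hmono
end

section
/- Let H be a real Hilbert space, α ∈ ]0,+∞[, let (ηₙ) be a summable sequence in [0,+∞[, and let (Wₙ) be a uniformly bounded sequence of bounded self-adjoint operators with Wₙ ≽ α·Id and (1+ηₙ)Wₙ₊₁ ≽ Wₙ for all n. Then there exists a bounded self-adjoint operator W with W ≽ α·Id such that Wₙ → W pointwise strongly. -/
/-!
Put `p n = ∏_{k<n} (1 + η k)`. The hypothesis `W n ≼ (1 + η n) W (n+1)` says exactly that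
`Vₙ = p n • W n` is increasing in the Loewner order, and `p n` increases to the finite product
`P = ∏ (1 + η k) ≥ 1`, so `(Vₙ)` is also bounded in norm. For `n ≤ m` the operator `Vₘ - Vₙ` is
positive of norm `≤ 2M`, and Cauchy–Schwarz for the semi-inner product `⟪(Vₘ - Vₙ) ·, ·⟫` gives
`‖(Vₘ - Vₙ) x‖² ≤ 2M (⟪Vₘ x, x⟫ - ⟪Vₙ x, x⟫)`; since the quadratic forms increase to a finite
limit, `(Vₙ x)` is Cauchy (Vigier's theorem). Hence `W n x = (p n)⁻¹ • Vₙ x` converges, the limit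
is a bounded operator by Banach–Steinhaus, and self-adjointness and the lower bound `α` pass to
the strong limit.
-/

open Filter Topology
open scoped InnerProductSpace

namespace ContinuousLinearMap

section Real

variable {H : Type*} [NormedAddCommGroup H] [InnerProductSpace ℝ H]

theorem IsPositive.norm_apply_sq_le {A : H →L[ℝ] H} (hA : A.IsPositive) (x : H) :
    ‖A x‖ ^ 2 ≤ ‖A‖ * ⟪A x, x⟫_ℝ := by
  -- Cauchy–Schwarz for the semi-inner product `⟪A ·, ·⟫` at the pair `(A x, x)`
  have hcs := LinearMap.BilinForm.apply_mul_apply_le_of_forall_zero_le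
    ((innerₗ H).comp (A : H →ₗ[ℝ] H)) hA.inner_nonneg_left (A x) x
  simp only [LinearMap.comp_apply, innerₗ_apply_apply, coe_coe,
    hA.inner_left_eq_inner_right (A x) x, real_inner_self_eq_norm_sq] at hcs
  have hAAx : ⟪A (A x), A x⟫_ℝ ≤ ‖A‖ * ‖A x‖ ^ 2 := by
    calc ⟪A (A x), A x⟫_ℝ ≤ ‖A (A x)‖ * ‖A x‖ := real_inner_le_norm _ _
    _ ≤ ‖A‖ * ‖A x‖ * ‖A x‖ := by gcongr; exact A.le_opNorm _
    _ = ‖A‖ * ‖A x‖ ^ 2 := by ring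
  rcases (sq_nonneg ‖A x‖).eq_or_lt with h0 | hAx_pos
  · rw [← h0]
    exact mul_nonneg (norm_nonneg A) (hA.inner_nonneg_left x)
  · nlinarith [hA.inner_nonneg_left x]

theorem le_of_forall_inner_le [CompleteSpace H] {S T : H →L[ℝ] H} (hS : IsSelfAdjoint S)
    (hT : IsSelfAdjoint T) (h : ∀ x, ⟪S x, x⟫_ℝ ≤ ⟪T x, x⟫_ℝ) : S ≤ T := by
  refine (le_def S T).2 ((isPositive_iff' _).2 ⟨hT.sub hS, fun x => ?_⟩)
  simpa only [sub_apply, inner_sub_left, sub_nonneg] using h x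

theorem exists_tendsto_apply_of_monotone [CompleteSpace H] {V : ℕ → H →L[ℝ] H}
    (hV : Monotone V) {M : ℝ} (hM : ∀ n, ‖V n‖ ≤ M) (x : H) :
    ∃ y, Tendsto (fun n => V n x) atTop (𝓝 y) := by
  set q : ℕ → ℝ := fun n => ⟪V n x, x⟫_ℝ
  have hq_mono : Monotone q := fun n m hnm => by
    simpa only [sub_apply, inner_sub_left, sub_nonneg] using (hV hnm).inner_nonneg_left x
  have hq_bdd : BddAbove (Set.range q) := by
    refine ⟨M * ‖x‖ * ‖x‖, Set.forall_mem_range.2 fun n => ?_⟩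
    calc q n ≤ ‖V n x‖ * ‖x‖ := real_inner_le_norm _ _
    _ ≤ M * ‖x‖ * ‖x‖ := by gcongr; exact (V n).le_of_opNorm_le (hM n) x
  set L := ⨆ n, q n
  have hq_lim : Tendsto q atTop (𝓝 L) := tendsto_atTop_ciSup hq_mono hq_bdd
  have hdist : ∀ n m, n ≤ m → dist (V n x) (V m x) ≤ √(2 * M * (L - q n)) := by
    intro n m hnm
    have hnorm : ‖V m - V n‖ ≤ 2 * M := by linarith [norm_sub_le (V m) (V n), hM m, hM n]
    have hsq := (hV hnm).norm_apply_sq_le x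
    simp only [sub_apply, inner_sub_left] at hsq
    rw [dist_comm, dist_eq_norm]
    refine Real.le_sqrt_of_sq_le (hsq.trans ?_)
    have hL : q m ≤ L := le_ciSup hq_bdd m
    have hqnm : q n ≤ q m := hq_mono hnm
    nlinarith [norm_nonneg (V m - V n)]
  refine cauchySeq_tendsto_of_complete (cauchySeq_of_le_tendsto_0' _ hdist ?_)
  simpa using ((hq_lim.const_sub L).const_mul (2 * M)).sqrt

end Real

theorem isSelfAdjoint_of_tendsto {𝕜 E ι : Type*} [RCLike 𝕜] [NormedAddCommGroup E]
    [InnerProductSpace 𝕜 E] [CompleteSpace E] {l : Filter ι} [l.NeBot] {T : ι → E →L[𝕜] E}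
    {S : E →L[𝕜] E} (hT : ∀ i, IsSelfAdjoint (T i))
    (h : ∀ x, Tendsto (fun i => T i x) l (𝓝 (S x))) : IsSelfAdjoint S := by
  refine isSelfAdjoint_iff_isSymmetric.2 fun u v =>
    tendsto_nhds_unique ((h u).inner (𝕜 := 𝕜) tendsto_const_nhds) ?_
  exact (tendsto_const_nhds.inner (𝕜 := 𝕜) (h v)).congr fun i =>
    (isSelfAdjoint_iff_isSymmetric.1 (hT i) u v).symm

end ContinuousLinearMap

theorem stmt_4_general {H : Type*} [NormedAddCommGroup H] [InnerProductSpace ℝ H] [CompleteSpace H]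
    (α : ℝ)
    (η : ℕ → ℝ) (hη0 : ∀ n, 0 ≤ η n) (hη : Summable η)
    (W : ℕ → H →L[ℝ] H) (hsa : ∀ n, IsSelfAdjoint (W n))
    (hlb : ∀ n (x : H), α * ‖x‖ ^ 2 ≤ (inner ℝ (W n x) x : ℝ))
    (hbd : ∃ μ : ℝ, ∀ n, ‖W n‖ ≤ μ)
    (hmono : ∀ n (x : H), (inner ℝ (W n x) x : ℝ) ≤ (1 + η n) * (inner ℝ (W (n + 1) x) x : ℝ)) :
    ∃ Wl : H →L[ℝ] H, IsSelfAdjoint Wl ∧ (∀ x : H, α * ‖x‖ ^ 2 ≤ (inner ℝ (Wl x) x : ℝ)) ∧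
      ∀ x : H, Tendsto (fun n => W n x) atTop (𝓝 (Wl x)) := by
  obtain ⟨μ, hμ⟩ := hbd
  set p : ℕ → ℝ := fun n => ∏ k ∈ Finset.range n, (1 + η k)
  have hp_pos (n : ℕ) : 0 < p n := Finset.prod_pos fun k _ => by linarith [hη0 k]
  have hp_mono : Monotone p := fun n m hnm => Finset.prod_le_prod_of_subset_of_one_le
    (Finset.range_mono hnm) (fun k _ => by linarith [hη0 k]) fun k _ _ => by linarith [hη0 k]
  set P := ∏' k, (1 + η k)
  have hp_lim : Tendsto p atTop (𝓝 P) :=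
    (Real.multipliable_one_add_of_summable hη).hasProd.tendsto_prod_nat
  have hP_pos : 0 < P := (hp_pos 0).trans_le (hp_mono.ge_of_tendsto hp_lim 0)
  have hV_mono : Monotone fun n => p n • W n := monotone_nat_of_le_succ fun n =>
    ContinuousLinearMap.le_of_forall_inner_le ((IsSelfAdjoint.all _).smul (hsa n))
      ((IsSelfAdjoint.all _).smul (hsa (n + 1))) fun x => by
        simp only [smul_apply, real_inner_smul_left, p, Finset.prod_range_succ, mul_assoc]
        exact mul_le_mul_of_nonneg_left (hmono n x) (hp_pos n).le
  have hV_bdd (n : ℕ) : ‖p n • W n‖ ≤ P * μ := by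
    rw [norm_smul, Real.norm_of_nonneg (hp_pos n).le]
    exact mul_le_mul (hp_mono.ge_of_tendsto hp_lim n) (hμ n) (norm_nonneg _) hP_pos.le
  choose V hV using ContinuousLinearMap.exists_tendsto_apply_of_monotone hV_mono hV_bdd
  have hW (x : H) : Tendsto (fun n => W n x) atTop (𝓝 (P⁻¹ • V x)) := by
    refine ((hp_lim.inv₀ hP_pos.ne').smul (hV x)).congr fun n => ?_
    simp [smul_smul, inv_mul_cancel₀ (hp_pos n).ne']
  refine ⟨continuousLinearMapOfTendsto W (tendsto_pi_nhds.2 hW),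
    ContinuousLinearMap.isSelfAdjoint_of_tendsto hsa hW, fun x => ?_, hW⟩
  exact ge_of_tendsto' ((hW x).inner tendsto_const_nhds) (hlb · x)

theorem stmt_4 {H : Type*} [NormedAddCommGroup H] [InnerProductSpace ℝ H] [CompleteSpace H]
    (α : ℝ) (hα : 0 < α)
    (η : ℕ → ℝ) (hη0 : ∀ n, 0 ≤ η n) (hη : Summable η)
    (W : ℕ → H →L[ℝ] H) (hsa : ∀ n, IsSelfAdjoint (W n))
    (hlb : ∀ n (x : H), α * ‖x‖ ^ 2 ≤ (inner ℝ (W n x) x : ℝ))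
    (hbd : ∃ μ : ℝ, ∀ n, ‖W n‖ ≤ μ)
    (hmono : ∀ n (x : H), (inner ℝ (W n x) x : ℝ) ≤ (1 + η n) * (inner ℝ (W (n + 1) x) x : ℝ)) :
    ∃ Wl : H →L[ℝ] H, IsSelfAdjoint Wl ∧ (∀ x : H, α * ‖x‖ ^ 2 ≤ (inner ℝ (Wl x) x : ℝ)) ∧
      ∀ x : H, Tendsto (fun n => W n x) atTop (𝓝 (Wl x)) :=
  stmt_4_general α η hη0 hη W hsa hlb hbd hmono
end

section
/- Let H be a real Hilbert space, α > 0, φ : [0,+∞[ → [0,+∞[ strictly increasing with φ(t) → +∞ as t → +∞, (Wₙ) a sequence of bounded self-adjoint operators with Wₙ ≽ α·Id, C a nonempty subset of H, and (xₙ) a sequence in H that is φ-quasi-Fejér monotone with respect to C relative to (Wₙ). Then for every z ∈ C, the sequence (‖xₙ − z‖_{Wₙ}) converges, and (xₙ) is bounded. -/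
/-!
Fix `z ∈ C` and put `aₙ = φ ‖xₙ - z‖_{Wₙ}`. Iterating the Fejér inequality with `1 + η ≤ exp η`
bounds `aₙ` by `M = (a₀ + ∑ ε) · exp (∑ η)`, so `aₙ₊₁ ≤ aₙ + (M ηₙ + εₙ)` with a summable
perturbation; then `aₙ` minus the partial sums of the perturbation is nonincreasing and bounded
below, hence `(aₙ)` converges. Since `φ` is strictly increasing and coercive, `‖xₙ - z‖_{Wₙ}` is
bounded and cannot have two distinct cluster values, so it converges as well. Finally
`√α ‖xₙ - z‖ ≤ ‖xₙ - z‖_{Wₙ}` bounds `(xₙ)`.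
-/

open Filter Topology

noncomputable def wnorm {H : Type*} [NormedAddCommGroup H] [InnerProductSpace ℝ H]
    (W : H →L[ℝ] H) (x : H) : ℝ :=
  Real.sqrt (inner ℝ (W x) x : ℝ)

open Finset

section QuasiFejer

variable {a η ε : ℕ → ℝ}

lemma le_mul_exp_sum_of_le_one_add_mul_add (ha : ∀ n, 0 ≤ a n) (hη : ∀ n, 0 ≤ η n)
    (hε : ∀ n, 0 ≤ ε n) (hrec : ∀ n, a (n + 1) ≤ (1 + η n) * a n + ε n) (n : ℕ) :
    a n ≤ (a 0 + ∑ k ∈ range n, ε k) * Real.exp (∑ k ∈ range n, η k) := by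
  induction n with
  | zero => simp
  | succ n ih =>
    have hA : 0 ≤ a 0 + ∑ k ∈ range n, ε k := add_nonneg (ha 0) (sum_nonneg fun k _ => hε k)
    have hE : 1 ≤ Real.exp (∑ k ∈ range (n + 1), η k) :=
      Real.one_le_exp (sum_nonneg fun k _ => hη k)
    calc a (n + 1) ≤ (1 + η n) * a n + ε n := hrec n
      _ ≤ Real.exp (η n) * ((a 0 + ∑ k ∈ range n, ε k) * Real.exp (∑ k ∈ range n, η k))
            + ε n := by
          gcongr
          · exact ha n
          · linarith [Real.add_one_le_exp (η n)]
      _ = (a 0 + ∑ k ∈ range n, ε k) * Real.exp (∑ k ∈ range (n + 1), η k) + ε n := by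
          rw [sum_range_succ, Real.exp_add]; ring
      _ ≤ (a 0 + ∑ k ∈ range (n + 1), ε k) * Real.exp (∑ k ∈ range (n + 1), η k) := by
          rw [sum_range_succ ε]; nlinarith [hε n]

lemma le_mul_exp_tsum_of_le_one_add_mul_add (ha : ∀ n, 0 ≤ a n) (hη : ∀ n, 0 ≤ η n)
    (hε : ∀ n, 0 ≤ ε n) (hηs : Summable η) (hεs : Summable ε)
    (hrec : ∀ n, a (n + 1) ≤ (1 + η n) * a n + ε n) (n : ℕ) :
    a n ≤ (a 0 + ∑' k, ε k) * Real.exp (∑' k, η k) := by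
  refine (le_mul_exp_sum_of_le_one_add_mul_add ha hη hε hrec n).trans ?_
  gcongr
  · exact add_nonneg (ha 0) (tsum_nonneg hε)
  · exact hεs.sum_le_tsum _ fun k _ => hε k
  · exact hηs.sum_le_tsum _ fun k _ => hη k

lemma exists_tendsto_of_le_add_summable {δ : ℕ → ℝ} {m : ℝ} (hm : ∀ n, m ≤ a n)
    (hδ : Summable δ) (hrec : ∀ n, a (n + 1) ≤ a n + δ n) :
    ∃ l, Tendsto a atTop (𝓝 l) := by
  have hpartial := hδ.hasSum.tendsto_sum_nat
  obtain ⟨S, hS⟩ := hpartial.bddAbove_range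
  set b : ℕ → ℝ := fun n => a n - ∑ k ∈ range n, δ k
  have hb_anti : Antitone b := antitone_nat_of_succ_le fun n => by
    simp only [b, sum_range_succ]; linarith [hrec n]
  have hb_bdd : BddBelow (Set.range b) := ⟨m - S, by
    rintro _ ⟨n, rfl⟩; linarith [hm n, hS ⟨n, rfl⟩]⟩
  exact ⟨_, by simpa [b] using (tendsto_atTop_ciInf hb_anti hb_bdd).add hpartial⟩

lemma exists_tendsto_of_le_one_add_mul_add (ha : ∀ n, 0 ≤ a n) (hη : ∀ n, 0 ≤ η n)
    (hε : ∀ n, 0 ≤ ε n) (hηs : Summable η) (hεs : Summable ε)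
    (hrec : ∀ n, a (n + 1) ≤ (1 + η n) * a n + ε n) :
    ∃ l, Tendsto a atTop (𝓝 l) := by
  set M := (a 0 + ∑' k, ε k) * Real.exp (∑' k, η k)
  have hM := le_mul_exp_tsum_of_le_one_add_mul_add ha hη hε hηs hεs hrec
  refine exists_tendsto_of_le_add_summable ha ((hηs.mul_left M).add hεs) fun n => ?_
  nlinarith [hrec n, mul_le_mul_of_nonneg_left (hM n) (hη n)]

end QuasiFejer

lemma exists_tendsto_of_tendsto_comp_strictMonoOn {φ : ℝ → ℝ}
    (hφmono : StrictMonoOn φ (Set.Ici 0)) (hφlim : Tendsto φ atTop atTop) {b : ℕ → ℝ}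
    (hb : ∀ n, 0 ≤ b n) {L : ℝ} (hL : Tendsto (fun n => φ (b n)) atTop (𝓝 L)) :
    ∃ l, Tendsto b atTop (𝓝 l) := by
  obtain ⟨T, hT⟩ := (hφlim.eventually_ge_atTop (L + 1)).exists_forall_of_atTop
  have hbdd : IsBoundedUnder (· ≤ ·) atTop b := isBoundedUnder_of_eventually_le (a := T) <| by
    filter_upwards [hL.eventually (eventually_lt_nhds (lt_add_one L))] with n hn
    by_contra! h
    linarith [hT (b n) h.le]
  have hbdd' : IsBoundedUnder (· ≥ ·) atTop b := isBoundedUnder_of ⟨0, hb⟩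
  refine ⟨limsup b atTop, tendsto_of_liminf_eq_limsup ?_ rfl hbdd hbdd'⟩
  refine (liminf_le_limsup hbdd hbdd').antisymm (not_lt.1 fun hlt => ?_)
  obtain ⟨r, hlr, hrl⟩ := exists_between hlt
  obtain ⟨s, hrs, hsl⟩ := exists_between hrl
  have hlow : ∃ᶠ n in atTop, b n < r := frequently_lt_of_liminf_lt hbdd.isCoboundedUnder_ge hlr
  have hhigh : ∃ᶠ n in atTop, s < b n :=
    frequently_lt_of_lt_limsup hbdd'.isCoboundedUnder_le hsl
  obtain ⟨n₀, hn₀⟩ := hlow.exists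
  have hr0 : 0 ≤ r := (hb n₀).trans hn₀.le
  have hLr : L ≤ φ r := isClosed_Iic.mem_of_frequently_of_tendsto
    (hlow.mono fun n hn => (hφmono (hb n) hr0 hn).le) hL
  have hLs : φ s ≤ L := isClosed_Ici.mem_of_frequently_of_tendsto
    (hhigh.mono fun n hn => (hφmono (hr0.trans hrs.le) (hb n) hn).le) hL
  exact (hφmono hr0 (hr0.trans hrs.le) hrs).not_ge (hLs.trans hLr)

lemma sqrt_mul_norm_le_wnorm {H : Type*} [NormedAddCommGroup H] [InnerProductSpace ℝ H]
    {W : H →L[ℝ] H} {α : ℝ} (hα : 0 ≤ α) {y : H} (hy : α * ‖y‖ ^ 2 ≤ inner ℝ (W y) y) :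
    Real.sqrt α * ‖y‖ ≤ wnorm W y := by
  rw [← Real.sqrt_sq (norm_nonneg y), ← Real.sqrt_mul hα]
  exact Real.sqrt_le_sqrt hy

theorem stmt_5_general {H : Type*} [NormedAddCommGroup H] [InnerProductSpace ℝ H]
    (α : ℝ) (hα : 0 < α)
    (φ : ℝ → ℝ) (hφ0 : ∀ t, 0 ≤ t → 0 ≤ φ t)
    (hφmono : StrictMonoOn φ (Set.Ici (0 : ℝ)))
    (hφlim : Tendsto φ atTop atTop)
    (W : ℕ → H →L[ℝ] H)
    (hlb : ∀ n (x : H), α * ‖x‖ ^ 2 ≤ (inner ℝ (W n x) x : ℝ))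
    (C : Set H) (hC : C.Nonempty) (x : ℕ → H)
    (hfejer : ∃ η : ℕ → ℝ, (∀ n, 0 ≤ η n) ∧ Summable η ∧
      ∀ z ∈ C, ∃ ε : ℕ → ℝ, (∀ n, 0 ≤ ε n) ∧ Summable ε ∧
        ∀ n, φ (wnorm (W (n + 1)) (x (n + 1) - z)) ≤
          (1 + η n) * φ (wnorm (W n) (x n - z)) + ε n) :
    (∀ z ∈ C, ∃ l : ℝ, Tendsto (fun n => wnorm (W n) (x n - z)) atTop (𝓝 l)) ∧
    (∃ M : ℝ, ∀ n, ‖x n‖ ≤ M) := by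
  obtain ⟨η, hη, hηs, hrec⟩ := hfejer
  have hwnorm : ∀ n (y : H), 0 ≤ wnorm (W n) y := fun _ _ => Real.sqrt_nonneg _
  have hconv : ∀ z ∈ C, ∃ l : ℝ, Tendsto (fun n => wnorm (W n) (x n - z)) atTop (𝓝 l) := by
    intro z hz
    obtain ⟨ε, hε, hεs, hrec⟩ := hrec z hz
    obtain ⟨L, hL⟩ := exists_tendsto_of_le_one_add_mul_add (a := fun n => φ (wnorm (W n) (x n - z)))
      (fun n => hφ0 _ (hwnorm n _)) hη hε hηs hεs hrec
    exact exists_tendsto_of_tendsto_comp_strictMonoOn hφmono hφlim (fun n => hwnorm n _) hL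
  refine ⟨hconv, ?_⟩
  obtain ⟨z, hz⟩ := hC
  obtain ⟨B, hB⟩ := (hconv z hz).choose_spec.bddAbove_range
  have hsqrtα : 0 < Real.sqrt α := Real.sqrt_pos.2 hα
  refine ⟨B / Real.sqrt α + ‖z‖, fun n => ?_⟩
  have hxz : Real.sqrt α * ‖x n - z‖ ≤ B :=
    (sqrt_mul_norm_le_wnorm hα.le (hlb n _)).trans (hB ⟨n, rfl⟩)
  calc ‖x n‖ ≤ ‖x n - z‖ + ‖z‖ := norm_le_norm_sub_add (x n) z
    _ ≤ B / Real.sqrt α + ‖z‖ := by gcongr; rwa [le_div_iff₀' hsqrtα]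

theorem stmt_5 {H : Type*} [NormedAddCommGroup H] [InnerProductSpace ℝ H] [CompleteSpace H]
    (α : ℝ) (hα : 0 < α)
    (φ : ℝ → ℝ) (hφ0 : ∀ t, 0 ≤ t → 0 ≤ φ t)
    (hφmono : StrictMonoOn φ (Set.Ici (0 : ℝ)))
    (hφlim : Tendsto φ atTop atTop)
    (W : ℕ → H →L[ℝ] H) (hsa : ∀ n, IsSelfAdjoint (W n))
    (hlb : ∀ n (x : H), α * ‖x‖ ^ 2 ≤ (inner ℝ (W n x) x : ℝ))
    (C : Set H) (hC : C.Nonempty) (x : ℕ → H)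
    (hfejer : ∃ η : ℕ → ℝ, (∀ n, 0 ≤ η n) ∧ Summable η ∧
      ∀ z ∈ C, ∃ ε : ℕ → ℝ, (∀ n, 0 ≤ ε n) ∧ Summable ε ∧
        ∀ n, φ (wnorm (W (n + 1)) (x (n + 1) - z)) ≤
          (1 + η n) * φ (wnorm (W n) (x n - z)) + ε n) :
    (∀ z ∈ C, ∃ l : ℝ, Tendsto (fun n => wnorm (W n) (x n - z)) atTop (𝓝 l)) ∧
    (∃ M : ℝ, ∀ n, ‖x n‖ ≤ M) :=
  stmt_5_general α hα φ hφ0 hφmono hφlim W hlb C hC x hfejer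
end

section
/- Let H be a real Hilbert space, α > 0, (ηₙ) a summable sequence in [0,+∞[, and (Wₙ) a sequence of self-adjoint operators with Wₙ ≽ α·Id, sup_n ‖Wₙ‖ < +∞, and (1+ηₙ)Wₙ ≽ Wₙ₊₁ for all n. Let C be a nonempty subset of H and (xₙ) a sequence such that for every z ∈ C there is a summable (εₙ) with ‖xₙ₊₁ − z‖²_{Wₙ₊₁} ≤ (1+ηₙ)‖xₙ − z‖²_{Wₙ} + εₙ. Then the same quadratic quasi-Fejér property holds for every z in the convex hull of C: (xₙ) is |·|²-quasi-Fejér monotone with respect to conv C relative to (Wₙ). -/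
open Filter Topology

section WeightedQuadraticForm

variable {E : Type*} [NormedAddCommGroup E] [InnerProductSpace ℝ E] {ι : Type*} [Fintype ι]
  {w : ι → ℝ} {u : ι → E} {z : E}

theorem inner_map_sub_eq_sum_sub_sum (f : E →ₗ[ℝ] E) (hw : ∑ i, w i = 1)
    (hz : ∑ i, w i • u i = z) (x : E) :
    inner ℝ (f (x - z)) (x - z) =
      ∑ i, w i * inner ℝ (f (x - u i)) (x - u i) -
        ∑ i, w i * inner ℝ (f (u i - z)) (u i - z) := by
  have hleft : ∀ y, ∑ i, w i * inner ℝ (f y) (u i) = inner ℝ (f y) z := fun y => by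
    simp only [← hz, inner_sum, real_inner_smul_right]
  have hright : ∀ y, ∑ i, w i * inner ℝ (f (u i)) y = inner ℝ (f z) y := fun y => by
    simp only [← hz, map_sum, map_smul, sum_inner, real_inner_smul_left]
  have hterm : ∀ i, inner ℝ (f (x - u i)) (x - u i) - inner ℝ (f (u i - z)) (u i - z) =
      inner ℝ (f x) x - inner ℝ (f x) (u i) - inner ℝ (f (u i)) x + inner ℝ (f z) (u i) +
        inner ℝ (f (u i)) z - inner ℝ (f z) z := fun i => by
    simp only [map_sub, inner_sub_left, inner_sub_right]
    ring
  rw [← Finset.sum_sub_distrib]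
  simp_rw [← mul_sub, hterm]
  simp only [mul_add, mul_sub, Finset.sum_add_distrib, Finset.sum_sub_distrib, ← Finset.sum_mul,
    hw, hleft, hright]
  simp only [map_sub, inner_sub_left, inner_sub_right]
  ring

theorem inner_map_sub_le_of_forall_le (f g : E →ₗ[ℝ] E) (hw0 : ∀ i, 0 ≤ w i)
    (hw : ∑ i, w i = 1) (hz : ∑ i, w i • u i = z) {x y : E} {t : ℝ} {e : ι → ℝ}
    (h : ∀ i, inner ℝ (g (y - u i)) (y - u i) ≤ t * inner ℝ (f (x - u i)) (x - u i) + e i) :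
    inner ℝ (g (y - z)) (y - z) ≤
      t * inner ℝ (f (x - z)) (x - z) + (∑ i, w i * e i +
        (t * ∑ i, w i * inner ℝ (f (u i - z)) (u i - z) -
          ∑ i, w i * inner ℝ (g (u i - z)) (u i - z))) := by
  have hsum : ∑ i, w i * inner ℝ (g (y - u i)) (y - u i) ≤
      t * ∑ i, w i * inner ℝ (f (x - u i)) (x - u i) + ∑ i, w i * e i := calc
    _ ≤ ∑ i, w i * (t * inner ℝ (f (x - u i)) (x - u i) + e i) :=
      Finset.sum_le_sum fun i _ => mul_le_mul_of_nonneg_left (h i) (hw0 i)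
    _ = _ := by
      rw [Finset.mul_sum, ← Finset.sum_add_distrib]
      exact Finset.sum_congr rfl fun i _ => by ring
  rw [inner_map_sub_eq_sum_sub_sum f hw hz, inner_map_sub_eq_sum_sub_sum g hw hz]
  linarith

end WeightedQuadraticForm

theorem le_mul_exp_sum_range_of_succ_le {c η : ℕ → ℝ} (hc : ∀ n, 0 ≤ c n)
    (h : ∀ n, c (n + 1) ≤ (1 + η n) * c n) (n : ℕ) :
    c n ≤ c 0 * Real.exp (∑ k ∈ Finset.range n, η k) := by
  induction n with
  | zero => simp
  | succ n ih => calc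
    c (n + 1) ≤ (1 + η n) * c n := h n
    _ ≤ Real.exp (η n) * (c 0 * Real.exp (∑ k ∈ Finset.range n, η k)) :=
      mul_le_mul (by linarith [Real.add_one_le_exp (η n)]) ih (hc n) (Real.exp_pos _).le
    _ = c 0 * Real.exp (∑ k ∈ Finset.range (n + 1), η k) := by
      rw [Finset.sum_range_succ, Real.exp_add]
      ring

theorem summable_one_add_mul_sub_of_succ_le {c η : ℕ → ℝ} (hc : ∀ n, 0 ≤ c n)
    (hη0 : ∀ n, 0 ≤ η n) (hη : Summable η) (h : ∀ n, c (n + 1) ≤ (1 + η n) * c n) :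
    Summable fun n => (1 + η n) * c n - c (n + 1) := by
  set B := c 0 * Real.exp (∑' k, η k)
  have hcB : ∀ n, c n ≤ B := fun n =>
    (le_mul_exp_sum_range_of_succ_le hc h n).trans <| mul_le_mul_of_nonneg_left
      (Real.exp_le_exp.2 (hη.sum_le_tsum _ fun k _ => hη0 k)) (hc 0)
  have hηc : Summable fun n => η n * c n :=
    (hη.mul_right B).of_nonneg_of_le (fun n => mul_nonneg (hη0 n) (hc n))
      fun n => mul_le_mul_of_nonneg_left (hcB n) (hη0 n)
  refine summable_of_sum_range_le (c := ∑' n, η n * c n + c 0)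
    (fun n => sub_nonneg.2 (h n)) fun N => ?_
  have hsplit : ∀ n, (1 + η n) * c n - c (n + 1) = η n * c n + (c n - c (n + 1)) :=
    fun n => by ring
  simp only [hsplit, Finset.sum_add_distrib, Finset.sum_range_sub']
  linarith [hηc.sum_le_tsum (Finset.range N) fun n _ => mul_nonneg (hη0 n) (hc n), hc N]

theorem stmt_8_general {H : Type*} [NormedAddCommGroup H] [InnerProductSpace ℝ H]
    (α : ℝ) (hα : 0 < α)
    (η : ℕ → ℝ) (hη0 : ∀ n, 0 ≤ η n) (hη : Summable η)
    (W : ℕ → H →L[ℝ] H)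
    (hlb : ∀ n (x : H), α * ‖x‖ ^ 2 ≤ (inner ℝ (W n x) x : ℝ))
    (hmono : ∀ n (x : H), (inner ℝ (W (n + 1) x) x : ℝ) ≤ (1 + η n) * (inner ℝ (W n x) x : ℝ))
    (C : Set H) (x : ℕ → H)
    (hfejer : ∀ z ∈ C, ∃ ε : ℕ → ℝ, (∀ n, 0 ≤ ε n) ∧ Summable ε ∧
      ∀ n, wnorm (W (n + 1)) (x (n + 1) - z) ^ 2 ≤
        (1 + η n) * wnorm (W n) (x n - z) ^ 2 + ε n) :
    ∃ η' : ℕ → ℝ, (∀ n, 0 ≤ η' n) ∧ Summable η' ∧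
      ∀ z ∈ convexHull ℝ C, ∃ ε : ℕ → ℝ, (∀ n, 0 ≤ ε n) ∧ Summable ε ∧
        ∀ n, wnorm (W (n + 1)) (x (n + 1) - z) ^ 2 ≤
          (1 + η' n) * wnorm (W n) (x n - z) ^ 2 + ε n := by
  have hW0 : ∀ n v, 0 ≤ inner ℝ (W n v) v := fun n v =>
    (mul_nonneg hα.le (sq_nonneg _)).trans (hlb n v)
  have hsq : ∀ n v, wnorm (W n) v ^ 2 = inner ℝ (W n v) v := fun n v => Real.sq_sqrt (hW0 n v)
  refine ⟨η, hη0, hη, fun z hz => ?_⟩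
  obtain ⟨ι, _, w, u, hw0, hw, huC, hu⟩ := mem_convexHull_iff_exists_fintype.1 hz
  choose ε hε0 hε hεle using fun i => hfejer (u i) (huC i)
  set c : ℕ → ℝ := fun n => ∑ i, w i * inner ℝ (W n (u i - z)) (u i - z)
  have hc0 : ∀ n, 0 ≤ c n := fun n =>
    Finset.sum_nonneg fun i _ => mul_nonneg (hw0 i) (hW0 n _)
  have hc : ∀ n, c (n + 1) ≤ (1 + η n) * c n := fun n => by
    simp only [c, Finset.mul_sum, mul_left_comm (1 + η n)]
    exact Finset.sum_le_sum fun i _ => mul_le_mul_of_nonneg_left (hmono n _) (hw0 i)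
  refine ⟨fun n => ∑ i, w i * ε i n + ((1 + η n) * c n - c (n + 1)), fun n => ?_, ?_, fun n => ?_⟩
  · exact add_nonneg (Finset.sum_nonneg fun i _ => mul_nonneg (hw0 i) (hε0 i n))
      (sub_nonneg.2 (hc n))
  · exact (summable_sum fun i _ => (hε i).mul_left (w i)).add
      (summable_one_add_mul_sub_of_succ_le hc0 hη0 hη hc)
  · simp only [hsq] at hεle ⊢
    exact inner_map_sub_le_of_forall_le (W n : H →ₗ[ℝ] H) (W (n + 1)) hw0 hw hu fun i => hεle i n

theorem stmt_8 {H : Type*} [NormedAddCommGroup H] [InnerProductSpace ℝ H] [CompleteSpace H]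
    (α : ℝ) (hα : 0 < α)
    (η : ℕ → ℝ) (hη0 : ∀ n, 0 ≤ η n) (hη : Summable η)
    (W : ℕ → H →L[ℝ] H) (hsa : ∀ n, IsSelfAdjoint (W n))
    (hlb : ∀ n (x : H), α * ‖x‖ ^ 2 ≤ (inner ℝ (W n x) x : ℝ))
    (hbd : ∃ μ : ℝ, ∀ n, ‖W n‖ ≤ μ)
    (hmono : ∀ n (x : H), (inner ℝ (W (n + 1) x) x : ℝ) ≤ (1 + η n) * (inner ℝ (W n x) x : ℝ))
    (C : Set H) (hC : C.Nonempty) (x : ℕ → H)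
    (hfejer : ∀ z ∈ C, ∃ ε : ℕ → ℝ, (∀ n, 0 ≤ ε n) ∧ Summable ε ∧
      ∀ n, wnorm (W (n + 1)) (x (n + 1) - z) ^ 2 ≤
        (1 + η n) * wnorm (W n) (x n - z) ^ 2 + ε n) :
    ∃ η' : ℕ → ℝ, (∀ n, 0 ≤ η' n) ∧ Summable η' ∧
      ∀ z ∈ convexHull ℝ C, ∃ ε : ℕ → ℝ, (∀ n, 0 ≤ ε n) ∧ Summable ε ∧
        ∀ n, wnorm (W (n + 1)) (x (n + 1) - z) ^ 2 ≤
          (1 + η' n) * wnorm (W n) (x n - z) ^ 2 + ε n :=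
  stmt_8_general α hα η hη0 hη W hlb hmono C x hfejer
end

section
/- Let H be a real Hilbert space, α > 0, (ηₙ) summable in [0,+∞[, (Wₙ) a uniformly bounded sequence of self-adjoint operators with Wₙ ≽ α·Id, C a nonempty closed convex subset of H, and (xₙ) a sequence such that there exist summable (εₙ), (ηₙ) with ‖xₙ₊₁ − z‖²_{Wₙ₊₁} ≤ (1+ηₙ)‖xₙ − z‖²_{Wₙ} + εₙ for all z ∈ C and n ∈ ℕ. Then the projected sequence (P_C^{Wₙ} xₙ) converges strongly in H. -/
/-!
The quantity `dₙ = ‖xₙ - zₙ‖²_{Wₙ}` is itself quasi-Fejér: since `zₙ ∈ C`,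
`dₙ₊₁ ≤ ‖xₙ₊₁ - zₙ‖²_{Wₙ₊₁} ≤ (1 + ηₙ) dₙ + εₙ`, so `dₙ` converges to some `L`.
The variational inequality of the projection gives, for `y ∈ C`,
`dₘ + α ‖zₘ - y‖² ≤ ‖xₘ - y‖²_{Wₘ}`. Taking `y = zₙ` and iterating the Fejér inequality from `n`
to `m` bounds the right side by `(dₙ + ∑_{k ≥ n} εₖ) exp (∑_{k ≥ n} ηₖ)`, which tends to `L`,
while `dₘ → L`; hence `(zₙ)` is Cauchy.
-/

open Filter Topology

open Finset
open scoped InnerProductSpace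

section QuasiFejer

variable {a c η ε : ℕ → ℝ}

lemma sum_Ico_le_tsum_nat_add {f : ℕ → ℝ} (hf0 : ∀ k, 0 ≤ f k) (hf : Summable f) (n m : ℕ) :
    ∑ k ∈ Ico n m, f k ≤ ∑' k, f (k + n) := by
  rw [sum_Ico_eq_sum_range]
  simpa only [add_comm n] using
    ((summable_nat_add_iff n).mpr hf).sum_le_tsum (range (m - n)) fun k _ => hf0 (k + n)

lemma tsum_nat_add_eq_add_tsum_nat_add_succ (hc : Summable c) (n : ℕ) :
    ∑' k, c (k + n) = c n + ∑' k, c (k + (n + 1)) := by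
  rw [((summable_nat_add_iff n).mpr hc).tsum_eq_zero_add]
  simp only [zero_add, add_assoc, add_comm 1 n]

theorem exists_tendsto_of_succ_le_add_summable (ha : BddBelow (Set.range a))
    (hc0 : ∀ n, 0 ≤ c n) (hc : Summable c) (hrec : ∀ n, a (n + 1) ≤ a n + c n) :
    ∃ L, Tendsto a atTop (𝓝 L) := by
  set u : ℕ → ℝ := fun n => a n + ∑' k, c (k + n)
  have hu_anti : Antitone u := antitone_nat_of_succ_le fun n => by
    linarith [hrec n, tsum_nat_add_eq_add_tsum_nat_add_succ hc n]
  obtain ⟨b, hb⟩ := ha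
  have hu_bdd : BddBelow (Set.range u) := by
    refine ⟨b, ?_⟩
    rintro _ ⟨n, rfl⟩
    exact (hb ⟨n, rfl⟩).trans (le_add_of_nonneg_right (tsum_nonneg fun k => hc0 _))
  refine ⟨⨅ n, u n, ?_⟩
  simpa [u] using (tendsto_atTop_ciInf hu_anti hu_bdd).sub (tendsto_sum_nat_add c)

theorem le_mul_exp_sum_Ico_of_quasiFejer (hη0 : ∀ k, 0 ≤ η k) (hε0 : ∀ k, 0 ≤ ε k) {n : ℕ}
    (han : 0 ≤ a n) (hrec : ∀ k, n ≤ k → a (k + 1) ≤ (1 + η k) * a k + ε k)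
    {m : ℕ} (hnm : n ≤ m) :
    a m ≤ (a n + ∑ k ∈ Ico n m, ε k) * Real.exp (∑ k ∈ Ico n m, η k) := by
  induction m, hnm using Nat.le_induction with
  | base => simp
  | succ m hnm ih =>
    rw [sum_Ico_succ_top hnm, sum_Ico_succ_top hnm, Real.exp_add, ← add_assoc]
    set A := a n + ∑ k ∈ Ico n m, ε k
    set E := Real.exp (∑ k ∈ Ico n m, η k)
    have hA : 0 ≤ A := add_nonneg han (sum_nonneg fun k _ => hε0 k)
    have hE : 1 ≤ E := Real.one_le_exp (sum_nonneg fun k _ => hη0 k)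
    have hexp : 1 + η m ≤ Real.exp (η m) := by linarith [Real.add_one_le_exp (η m)]
    have hexp' : 1 ≤ Real.exp (η m) := Real.one_le_exp (hη0 m)
    calc a (m + 1) ≤ (1 + η m) * a m + ε m := hrec m hnm
      _ ≤ (1 + η m) * (A * E) + ε m := by gcongr; linarith [hη0 m]
      _ ≤ Real.exp (η m) * (A * E) + ε m * (E * Real.exp (η m)) := by
        gcongr
        exact le_mul_of_one_le_right (hε0 m) (one_le_mul_of_one_le_of_one_le hE hexp')
      _ = (A + ε m) * (E * Real.exp (η m)) := by ring

theorem le_mul_exp_tsum_of_quasiFejer (hη0 : ∀ k, 0 ≤ η k) (hη : Summable η)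
    (hε0 : ∀ k, 0 ≤ ε k) (hε : Summable ε) {n : ℕ}
    (han : 0 ≤ a n) (hrec : ∀ k, n ≤ k → a (k + 1) ≤ (1 + η k) * a k + ε k)
    {m : ℕ} (hnm : n ≤ m) :
    a m ≤ (a n + ∑' k, ε (k + n)) * Real.exp (∑' k, η (k + n)) := by
  refine (le_mul_exp_sum_Ico_of_quasiFejer hη0 hε0 han hrec hnm).trans ?_
  have := sum_Ico_le_tsum_nat_add hε0 hε n m
  have := sum_Ico_le_tsum_nat_add hη0 hη n m
  have : 0 ≤ ∑' k, ε (k + n) := tsum_nonneg fun k => hε0 _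
  gcongr

theorem exists_tendsto_of_quasiFejer (ha0 : ∀ n, 0 ≤ a n) (hη0 : ∀ k, 0 ≤ η k)
    (hη : Summable η) (hε0 : ∀ k, 0 ≤ ε k) (hε : Summable ε)
    (hrec : ∀ n, a (n + 1) ≤ (1 + η n) * a n + ε n) :
    ∃ L, Tendsto a atTop (𝓝 L) := by
  set M := (a 0 + ∑' k, ε (k + 0)) * Real.exp (∑' k, η (k + 0))
  have haM : ∀ n, a n ≤ M := fun n =>
    le_mul_exp_tsum_of_quasiFejer hη0 hη hε0 hε (ha0 0) (fun k _ => hrec k) n.zero_le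
  have hM : 0 ≤ M := (ha0 0).trans (haM 0)
  refine exists_tendsto_of_succ_le_add_summable (c := fun n => η n * M + ε n)
    ⟨0, by rintro _ ⟨n, rfl⟩; exact ha0 n⟩ (fun n => add_nonneg (mul_nonneg (hη0 n) hM) (hε0 n))
    ((hη.mul_right M).add hε) fun n => ?_
  nlinarith [hrec n, mul_le_mul_of_nonneg_left (haM n) (hη0 n)]

end QuasiFejer

theorem cauchySeq_of_sq_dist_le {X : Type*} [PseudoMetricSpace X] {s : ℕ → X} {d B : ℕ → ℝ}
    {L : ℝ} (hd : Tendsto d atTop (𝓝 L)) (hB : Tendsto B atTop (𝓝 L))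
    (h : ∀ n m, n ≤ m → dist (s m) (s n) ^ 2 ≤ B n - d m) : CauchySeq s := by
  rw [Metric.cauchySeq_iff']
  intro δ hδ
  have hr : 0 < δ ^ 2 / 2 := by positivity
  obtain ⟨N, hBN, hdN⟩ := ((hB.eventually (gt_mem_nhds (by linarith : L < L + δ ^ 2 / 2))).and
    (eventually_forall_ge_atTop.mpr
      (hd.eventually (lt_mem_nhds (by linarith : L - δ ^ 2 / 2 < L))))).exists
  refine ⟨N, fun n hn => lt_of_pow_lt_pow_left₀ 2 hδ.le ?_⟩
  linarith [h N n hn, hdN n hn]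

theorem cauchySeq_of_quasiFejer_of_gap {X : Type*} [PseudoMetricSpace X] {φ : ℕ → X → ℝ}
    {s : ℕ → X} {η ε : ℕ → ℝ} {α : ℝ} (hα : 0 < α) (hφ0 : ∀ n, 0 ≤ φ n (s n))
    (hη0 : ∀ k, 0 ≤ η k) (hη : Summable η) (hε0 : ∀ k, 0 ≤ ε k) (hε : Summable ε)
    (hstep : ∀ n k, φ (k + 1) (s n) ≤ (1 + η k) * φ k (s n) + ε k)
    (hgap : ∀ n m, φ m (s m) + α * dist (s m) (s n) ^ 2 ≤ φ m (s n)) : CauchySeq s := by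
  set d : ℕ → ℝ := fun n => φ n (s n)
  have hd_le : ∀ n m, d m ≤ φ m (s n) := fun n m => by
    have : 0 ≤ α * dist (s m) (s n) ^ 2 := by positivity
    linarith [hgap n m]
  obtain ⟨L, hL⟩ := exists_tendsto_of_quasiFejer hφ0 hη0 hη hε0 hε fun k =>
    (hd_le k (k + 1)).trans (hstep k k)
  set B : ℕ → ℝ := fun n => (d n + ∑' k, ε (k + n)) * Real.exp (∑' k, η (k + n))
  have hB : Tendsto B atTop (𝓝 L) := by
    simpa using (hL.add (tendsto_sum_nat_add ε)).mul (tendsto_sum_nat_add η).rexp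
  refine cauchySeq_of_sq_dist_le (hL.div_const α) (hB.div_const α) fun n m hnm => ?_
  have := le_mul_exp_tsum_of_quasiFejer (a := fun k => φ k (s n)) hη0 hη hε0 hε (hφ0 n)
    (fun k _ => hstep n k) hnm
  rw [← sub_div, le_div_iff₀ hα]
  linarith [hgap n m]

theorem IsSelfAdjoint.inner_sub_add_mul_sq_le {H : Type*} [NormedAddCommGroup H]
    [InnerProductSpace ℝ H] [CompleteSpace H] {W : H →L[ℝ] H} (hW : IsSelfAdjoint W) {α : ℝ}
    (hα : ∀ v, α * ‖v‖ ^ 2 ≤ ⟪W v, v⟫_ℝ) {p q y : H} (hvar : ⟪W (y - q), p - q⟫_ℝ ≤ 0) :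
    ⟪W (p - q), p - q⟫_ℝ + α * ‖q - y‖ ^ 2 ≤ ⟪W (p - y), p - y⟫_ℝ := by
  have hsymm : ∀ v w, ⟪W v, w⟫_ℝ = ⟪W w, v⟫_ℝ := fun v w =>
    (hW.isSymmetric v w).trans (real_inner_comm _ _)
  have hsq : ∀ v w, ⟪W (v - w), v - w⟫_ℝ = ⟪W v, v⟫_ℝ - 2 * ⟪W w, v⟫_ℝ + ⟪W w, w⟫_ℝ := by
    intro v w
    rw [map_sub, inner_sub_left, inner_sub_right, inner_sub_right, hsymm v w]
    ring
  have hexpand : p - y = (p - q) - (y - q) := by abel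
  rw [hexpand, hsq (p - q) (y - q), norm_sub_rev]
  linarith [hα (y - q)]

lemma wnorm_sq {H : Type*} [NormedAddCommGroup H] [InnerProductSpace ℝ H] {W : H →L[ℝ] H}
    {v : H} (h : 0 ≤ ⟪W v, v⟫_ℝ) : wnorm W v ^ 2 = ⟪W v, v⟫_ℝ :=
  Real.sq_sqrt h

theorem stmt_10_general {H : Type*} [NormedAddCommGroup H] [InnerProductSpace ℝ H] [CompleteSpace H]
    (α : ℝ) (hα : 0 < α)
    (η ε : ℕ → ℝ) (hη0 : ∀ n, 0 ≤ η n) (hη : Summable η)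
    (hε0 : ∀ n, 0 ≤ ε n) (hε : Summable ε)
    (W : ℕ → H →L[ℝ] H) (hsa : ∀ n, IsSelfAdjoint (W n))
    (hlb : ∀ n (x : H), α * ‖x‖ ^ 2 ≤ (inner ℝ (W n x) x : ℝ))
    (C : Set H)
    (x : ℕ → H)
    (hfejer : ∀ z ∈ C, ∀ n, wnorm (W (n + 1)) (x (n + 1) - z) ^ 2 ≤
      (1 + η n) * wnorm (W n) (x n - z) ^ 2 + ε n)
    (z : ℕ → H) (hzC : ∀ n, z n ∈ C)
    (hzproj : ∀ n, ∀ y ∈ C, (inner ℝ (W n (y - z n)) (x n - z n) : ℝ) ≤ 0) :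
    ∃ l : H, Tendsto z atTop (𝓝 l) := by
  have hφ0 : ∀ n u, 0 ≤ ⟪W n (x n - u), x n - u⟫_ℝ := fun n u =>
    (by positivity : 0 ≤ α * ‖x n - u‖ ^ 2).trans (hlb n _)
  refine cauchySeq_tendsto_of_complete <|
    cauchySeq_of_quasiFejer_of_gap (φ := fun n u => ⟪W n (x n - u), x n - u⟫_ℝ)
      hα (fun n => hφ0 n (z n)) hη0 hη hε0 hε (fun n k => ?_) (fun n m => ?_)
  · simpa only [wnorm_sq (hφ0 _ _)] using hfejer (z n) (hzC n) k
  · rw [dist_eq_norm]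
    exact IsSelfAdjoint.inner_sub_add_mul_sq_le (hsa m) (hlb m) (hzproj m _ (hzC n))

theorem stmt_10 {H : Type*} [NormedAddCommGroup H] [InnerProductSpace ℝ H] [CompleteSpace H]
    (α : ℝ) (hα : 0 < α)
    (η ε : ℕ → ℝ) (hη0 : ∀ n, 0 ≤ η n) (hη : Summable η)
    (hε0 : ∀ n, 0 ≤ ε n) (hε : Summable ε)
    (W : ℕ → H →L[ℝ] H) (hsa : ∀ n, IsSelfAdjoint (W n))
    (hlb : ∀ n (x : H), α * ‖x‖ ^ 2 ≤ (inner ℝ (W n x) x : ℝ))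
    (hbd : ∃ μ : ℝ, ∀ n, ‖W n‖ ≤ μ)
    (C : Set H) (hC : C.Nonempty) (hCcl : IsClosed C) (hCconv : Convex ℝ C)
    (x : ℕ → H)
    (hfejer : ∀ z ∈ C, ∀ n, wnorm (W (n + 1)) (x (n + 1) - z) ^ 2 ≤
      (1 + η n) * wnorm (W n) (x n - z) ^ 2 + ε n)
    (z : ℕ → H) (hzC : ∀ n, z n ∈ C)
    (hzproj : ∀ n, ∀ y ∈ C, (inner ℝ (W n (y - z n)) (x n - z n) : ℝ) ≤ 0) :
    ∃ l : H, Tendsto z atTop (𝓝 l) :=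
  stmt_10_general α hα η ε hη0 hη hε0 hε W hsa hlb C x hfejer z hzC hzproj
end

section
/- Let H be a real Hilbert space, α > 0, W a self-adjoint operator with W ≽ α·Id, and T : H → H an operator with nonempty fixed point set Fix T satisfying ⟨y − Tx, x − Tx⟩_W ≤ 0 for all x ∈ H and y ∈ Fix T. Then for every x ∈ H, y ∈ Fix T, and λ ∈ [0,2], ‖x + λ(Tx − x) − y‖²_W ≤ ‖x − y‖²_W − λ(2−λ)‖Tx − x‖²_W. -/
/-! Write `a = x - y` and `b = Tx - x`, so that `Tx - y = a + b`. The hypothesis on `T` says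
`⟨a + b, b⟩_W ≤ 0`, i.e. `⟨a, b⟩_W ≤ -‖b‖²_W`, and expanding `‖a + λ b‖²_W` by symmetry of `W`
gives `‖a‖²_W + 2λ⟨a, b⟩_W + λ²‖b‖²_W ≤ ‖a‖²_W - λ(2 - λ)‖b‖²_W` for `λ ≥ 0`. -/

open scoped RealInnerProductSpace

section WeightedInner

variable {H : Type*} [NormedAddCommGroup H] [InnerProductSpace ℝ H] {W : H →L[ℝ] H}

lemma wnorm_sq_of_nonneg {x : H} (hx : 0 ≤ ⟪W x, x⟫) : wnorm W x ^ 2 = ⟪W x, x⟫ :=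
  Real.sq_sqrt hx

lemma inner_map_self_nonneg_of_coercive {α : ℝ} (hα : 0 < α) (hW : ∀ x, α * ‖x‖ ^ 2 ≤ ⟪W x, x⟫)
    (x : H) : 0 ≤ ⟪W x, x⟫ :=
  (by positivity : 0 ≤ α * ‖x‖ ^ 2).trans (hW x)

lemma inner_map_add_smul_self_of_isSymmetric (hW : (W : H →ₗ[ℝ] H).IsSymmetric)
    (a b : H) (t : ℝ) :
    ⟪W (a + t • b), a + t • b⟫ = ⟪W a, a⟫ + 2 * t * ⟪W a, b⟫ + t ^ 2 * ⟪W b, b⟫ := by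
  have hba : ⟪W b, a⟫ = ⟪W a, b⟫ := (hW b a).trans (real_inner_comm _ _)
  simp only [map_add, map_smul, inner_add_left, inner_add_right, real_inner_smul_left,
    real_inner_smul_right, hba]
  ring

lemma inner_map_add_smul_self_le_of_isSymmetric (hW : (W : H →ₗ[ℝ] H).IsSymmetric) {a b : H}
    (hab : ⟪W (a + b), b⟫ ≤ 0) {t : ℝ} (ht : 0 ≤ t) :
    ⟪W (a + t • b), a + t • b⟫ ≤ ⟪W a, a⟫ - t * (2 - t) * ⟪W b, b⟫ := by
  rw [map_add, inner_add_left] at hab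
  rw [inner_map_add_smul_self_of_isSymmetric hW]
  linarith [mul_nonpos_of_nonneg_of_nonpos ht hab]

end WeightedInner

theorem stmt_12_general {H : Type*} [NormedAddCommGroup H] [InnerProductSpace ℝ H] [CompleteSpace H]
    (α : ℝ) (hα : 0 < α)
    (W : H →L[ℝ] H) (hsa : IsSelfAdjoint W)
    (hlb : ∀ x : H, α * ‖x‖ ^ 2 ≤ (inner ℝ (W x) x : ℝ))
    (T : H → H)
    (hT : ∀ x y : H, T y = y → (inner ℝ (W (y - T x)) (x - T x) : ℝ) ≤ 0) :
    ∀ (x y : H) (lam : ℝ), T y = y → lam ∈ Set.Icc (0 : ℝ) 2 →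
      wnorm W (x + lam • (T x - x) - y) ^ 2 ≤
        wnorm W (x - y) ^ 2 - lam * (2 - lam) * wnorm W (T x - x) ^ 2 := by
  intro x y lam hy hlam
  have hnonneg := inner_map_self_nonneg_of_coercive hα hlb
  simp only [wnorm_sq_of_nonneg (hnonneg _)]
  have hTx : ⟪W (x - y + (T x - x)), T x - x⟫ ≤ 0 := by
    have h := hT x y hy
    rwa [← neg_sub (T x) y, ← neg_sub (T x) x, map_neg, inner_neg_neg,
      ← sub_add_sub_cancel (T x) x y, add_comm] at h
  rw [show x + lam • (T x - x) - y = x - y + lam • (T x - x) by abel]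
  exact inner_map_add_smul_self_le_of_isSymmetric hsa.isSymmetric hTx hlam.1

theorem stmt_12 {H : Type*} [NormedAddCommGroup H] [InnerProductSpace ℝ H] [CompleteSpace H]
    (α : ℝ) (hα : 0 < α)
    (W : H →L[ℝ] H) (hsa : IsSelfAdjoint W)
    (hlb : ∀ x : H, α * ‖x‖ ^ 2 ≤ (inner ℝ (W x) x : ℝ))
    (T : H → H) (hfix : ∃ y : H, T y = y)
    (hT : ∀ x y : H, T y = y → (inner ℝ (W (y - T x)) (x - T x) : ℝ) ≤ 0) :
    ∀ (x y : H) (lam : ℝ), T y = y → lam ∈ Set.Icc (0 : ℝ) 2 →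
      wnorm W (x + lam • (T x - x) - y) ^ 2 ≤
        wnorm W (x - y) ^ 2 - lam * (2 - lam) * wnorm W (T x - x) ^ 2 :=
  stmt_12_general α hα W hsa hlb T hT
end

section
/- Let H be a real Hilbert space, α > 0, γ > 0, W a self-adjoint operator with W ≽ α·Id, and A : H → 2^H a maximally monotone operator. Then the W-resolvent J^W_{γA} = (W + γA)⁻¹ ∘ W is a well-defined single-valued operator on H, its fixed point set equals the zero set {z ∈ H : 0 ∈ Az}, and it satisfies ⟨y − J^W_{γA}x, x − J^W_{γA}x⟩_W ≤ 0 for all x ∈ H and all y with 0 ∈ Ay. -/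
open Pointwise

def MaxMonotone {H : Type*} [NormedAddCommGroup H] [InnerProductSpace ℝ H]
    (A : H → Set H) : Prop :=
  (∀ x y u v, u ∈ A x → v ∈ A y → 0 ≤ (inner ℝ (x - y) (u - v) : ℝ)) ∧
  (∀ x u, (∀ y v, v ∈ A y → 0 ≤ (inner ℝ (x - y) (u - v) : ℝ)) → u ∈ A x)

/-!
Write `⟪u, v⟫_W = ⟪W u, v⟫`. The relation `W x - W p ∈ γ • A p` says `x - p ∈ B p` for
`B p = W ⁻¹' (γ • A p)`, and `B` is maximally monotone for `⟪·, ·⟫_W`; transferring maximality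
needs `W` to be onto, which is Lax–Milgram. Existence of `p` is then Minty's theorem for `B`,
proved by minimizing `r + ½‖x‖²_W + ½‖u‖²_W` over the epigraph of the Fitzpatrick function of `B`:
strong convexity makes minimizing sequences Cauchy, and at the minimizer `((x, u), r)` the
first-order condition combined with maximality forces `u = -x ∈ B x`. Uniqueness, the fixed
points and the inequality are all monotonicity of `B`, tested against `J x` and zeros of `A`.
-/

open scoped RealInnerProductSpace
open Filter Topology Set

theorem nonneg_of_forall_mul_add_sq_mul_nonneg {L Q : ℝ}
    (h : ∀ t, 0 < t → t ≤ 1 → 0 ≤ t * L + t ^ 2 * Q) : 0 ≤ L := by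
  have hlim : Tendsto (fun t : ℝ => L + t * Q) (𝓝[>] 0) (𝓝 L) := by
    have : Continuous fun t : ℝ => L + t * Q := by fun_prop
    simpa using (this.tendsto 0).mono_left nhdsWithin_le_nhds
  refine ge_of_tendsto hlim ?_
  filter_upwards [Ioc_mem_nhdsGT one_pos] with t ⟨ht0, ht1⟩
  refine nonneg_of_mul_nonneg_right ?_ ht0
  linarith [h t ht0 ht1]

theorem cauchySeq_of_dist_sq_le {X : Type*} [PseudoMetricSpace X] {f : ℕ → X} {ε : ℕ → ℝ}
    (hε : Tendsto ε atTop (𝓝 0)) (h : ∀ n m, dist (f n) (f m) ^ 2 ≤ ε n + ε m) :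
    CauchySeq f := by
  rw [Metric.cauchySeq_iff']
  intro δ hδ
  obtain ⟨N, hN⟩ :=
    eventually_atTop.1 (hε.eventually (gt_mem_nhds (by positivity : 0 < δ ^ 2 / 2)))
  refine ⟨N, fun n hn => lt_of_pow_lt_pow_left₀ 2 hδ.le ?_⟩
  linarith [h n N, hN n hn, hN N le_rfl]

theorem exists_isMinOn_snd_add_of_strongConvexOn {E : Type*} [NormedAddCommGroup E]
    [NormedSpace ℝ E] [CompleteSpace E] {S : Set (E × ℝ)} (hS : IsClosed S) (hSc : Convex ℝ S)
    (hne : S.Nonempty) {g : E → ℝ} {m : ℝ} (hm : 0 < m) (hg : StrongConvexOn univ m g)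
    (hgc : Continuous g) (hbdd : BddBelow ((fun p => p.2 + g p.1) '' S)) :
    ∃ p ∈ S, IsMinOn (fun p => p.2 + g p.1) S p := by
  set Φ : E × ℝ → ℝ := fun p => p.2 + g p.1
  set μ := sInf (Φ '' S)
  have hμ : ∀ q ∈ S, μ ≤ Φ q := fun q hq => csInf_le hbdd (mem_image_of_mem Φ hq)
  obtain ⟨φ, -, hφ, hφS⟩ := exists_seq_tendsto_sInf (hne.image Φ) hbdd
  choose p hpS hpφ using hφS
  change Tendsto φ atTop (𝓝 μ) at hφ
  -- The midpoint of `p n` and `p k` lies in `S`, so its value is at least `μ`.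
  have hdist : ∀ n k, dist (p n).1 (p k).1 ^ 2 ≤ 4 * (φ n - μ) / m + 4 * (φ k - μ) / m := by
    intro n k
    have hhalf : (0 : ℝ) ≤ 1 / 2 := by norm_num
    have hmid := hμ _ (hSc (hpS n) (hpS k) hhalf hhalf (by norm_num))
    have hconv := hg.2 (mem_univ (p n).1) (mem_univ (p k).1) hhalf hhalf (by norm_num)
    rw [← hpφ n, ← hpφ k, dist_eq_norm]
    simp only [Φ, Prod.fst_add, Prod.snd_add, Prod.smul_fst, Prod.smul_snd,
      smul_eq_mul] at hmid hconv ⊢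
    rw [← add_div, le_div_iff₀ hm]
    linarith
  have hε : Tendsto (fun n => 4 * (φ n - μ) / m) atTop (𝓝 0) := by
    simpa using ((hφ.sub_const μ).const_mul 4).div_const m
  obtain ⟨z, hz⟩ := cauchySeq_tendsto_of_complete (cauchySeq_of_dist_sq_le hε hdist)
  have hr : Tendsto (fun n => (p n).2) atTop (𝓝 (μ - g z)) := by
    simpa [← hpφ, Φ] using hφ.sub ((hgc.tendsto z).comp hz)
  have hmem : (z, μ - g z) ∈ S := hS.mem_of_tendsto (hz.prodMk_nhds hr) (.of_forall hpS)
  exact ⟨_, hmem, fun q hq => by simpa [Φ] using hμ q hq⟩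

section InnerProductSpace

variable {H : Type*} [NormedAddCommGroup H] [InnerProductSpace ℝ H]

section Quadratic

variable {T : H →L[ℝ] H}

theorem eq_zero_of_inner_map_self_nonpos {c : ℝ} (hc : 0 < c)
    (hTc : ∀ x, c * ‖x‖ ^ 2 ≤ ⟪T x, x⟫) {x : H} (hx : ⟪T x, x⟫ ≤ 0) : x = 0 := by
  have : ‖x‖ ^ 2 ≤ 0 := nonpos_of_mul_nonpos_right ((hTc x).trans hx) hc
  exact norm_eq_zero.1 (pow_eq_zero_iff two_ne_zero |>.1 (le_antisymm this (sq_nonneg _)))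

theorem surjective_of_inner_map_self_coercive [CompleteSpace H] {c : ℝ} (hc : 0 < c)
    (hTc : ∀ x, c * ‖x‖ ^ 2 ≤ ⟪T x, x⟫) : Function.Surjective T := by
  set b : H →L[ℝ] H →L[ℝ] ℝ := (innerSL ℝ : H →L[ℝ] H →L[ℝ] ℝ) ∘L T
  have hb : IsCoercive b := ⟨c, hc, fun x => by rw [mul_assoc, ← pow_two]; exact hTc x⟩
  have hbT : InnerProductSpace.continuousLinearMapOfBilin b = T := by
    ext x
    exact ext_inner_right ℝ (InnerProductSpace.continuousLinearMapOfBilin_apply b x)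
  intro y
  have := hb.range_eq_top ▸ Submodule.mem_top (x := y)
  rwa [hbT] at this

variable (hT : (T : H →ₗ[ℝ] H).IsSymmetric)
include hT

theorem inner_map_comm (x y : H) : ⟪T x, y⟫ = ⟪T y, x⟫ :=
  (hT x y).trans (real_inner_comm _ _)

theorem inner_map_add_self (x y : H) :
    ⟪T (x + y), x + y⟫ = ⟪T x, x⟫ + 2 * ⟪T x, y⟫ + ⟪T y, y⟫ := by
  simp only [map_add, inner_add_left, inner_add_right, inner_map_comm hT y x]
  ring

theorem inner_map_smul_add_smul_self {a b : ℝ} (hab : a + b = 1) (x y : H) :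
    ⟪T (a • x + b • y), a • x + b • y⟫
      = a * ⟪T x, x⟫ + b * ⟪T y, y⟫ - a * b * ⟪T (x - y), x - y⟫ := by
  obtain rfl := eq_sub_of_add_eq hab
  simp only [map_add, map_sub, map_smul, inner_add_left, inner_add_right, inner_sub_left,
    inner_sub_right, real_inner_smul_left, real_inner_smul_right, inner_map_comm hT y x]
  ring

end Quadratic

noncomputable def halfSqNormWrt (T : H →L[ℝ] H) (z : H × H) : ℝ :=
  (⟪T z.1, z.1⟫ + ⟪T z.2, z.2⟫) / 2

theorem strongConvexOn_halfSqNormWrt {T : H →L[ℝ] H} (hT : (T : H →ₗ[ℝ] H).IsSymmetric)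
    {c : ℝ} (hc : 0 ≤ c) (hTc : ∀ x, c * ‖x‖ ^ 2 ≤ ⟪T x, x⟫) :
    StrongConvexOn univ c (halfSqNormWrt T) := by
  refine ⟨convex_univ, fun z _ z' _ a b ha hb hab => ?_⟩
  have hnorm : ‖z - z'‖ ^ 2 ≤ ‖z.1 - z'.1‖ ^ 2 + ‖z.2 - z'.2‖ ^ 2 := by
    rw [Prod.norm_def, Prod.fst_sub, Prod.snd_sub]
    rcases le_total ‖z.1 - z'.1‖ ‖z.2 - z'.2‖ with h | h
    · rw [max_eq_right h]; linarith [sq_nonneg ‖z.1 - z'.1‖]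
    · rw [max_eq_left h]; linarith [sq_nonneg ‖z.2 - z'.2‖]
  simp only [halfSqNormWrt, Prod.fst_add, Prod.snd_add, Prod.smul_fst, Prod.smul_snd,
    smul_eq_mul, inner_map_smul_add_smul_self hT hab]
  nlinarith [hTc (z.1 - z'.1), hTc (z.2 - z'.2), mul_nonneg (mul_nonneg ha hb) hc,
    mul_nonneg ha hb]

section Fitzpatrick

variable (T : H →L[ℝ] H) (B : H → Set H)

def MonotoneWrt : Prop :=
  ∀ x y u v, u ∈ B x → v ∈ B y → 0 ≤ ⟪T (x - y), u - v⟫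

def MaxMonotoneWrt : Prop :=
  MonotoneWrt T B ∧ ∀ x u, (∀ y v, v ∈ B y → 0 ≤ ⟪T (x - y), u - v⟫) → u ∈ B x

/-- The epigraph of the Fitzpatrick function
`(x, u) ↦ sup {⟪T x, v⟫ + ⟪T y, u⟫ - ⟪T y, v⟫ | v ∈ B y}`, a set so that the possibly infinite
supremum never has to be formed. -/
def fitzpatrickEpigraph : Set ((H × H) × ℝ) :=
  {p | ∀ y v, v ∈ B y → ⟪T p.1.1, v⟫ + ⟪T y, p.1.2⟫ - ⟪T y, v⟫ ≤ p.2}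

variable {T B}

theorem isClosed_fitzpatrickEpigraph : IsClosed (fitzpatrickEpigraph T B) := by
  simp only [fitzpatrickEpigraph, ofPred_forall]
  exact isClosed_iInter fun y => isClosed_iInter fun v => isClosed_iInter fun _ =>
    isClosed_le (by fun_prop) (by fun_prop)

theorem convex_fitzpatrickEpigraph : Convex ℝ (fitzpatrickEpigraph T B) := by
  intro p hp q hq a b ha hb hab y v hv
  have hpq := add_le_add (mul_le_mul_of_nonneg_left (hp y v hv) ha)
    (mul_le_mul_of_nonneg_left (hq y v hv) hb)
  simp only [Prod.fst_add, Prod.snd_add, Prod.smul_fst, Prod.smul_snd, smul_eq_mul, map_add,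
    map_smul, inner_add_left, inner_add_right, real_inner_smul_left, real_inner_smul_right]
  linear_combination hpq + ⟪T y, v⟫ * hab

theorem MonotoneWrt.mem_fitzpatrickEpigraph (hB : MonotoneWrt T B) {x u : H} (hu : u ∈ B x) :
    ((x, u), ⟪T x, u⟫) ∈ fitzpatrickEpigraph T B := by
  intro y v hv
  have := hB x y u v hu hv
  simp only [map_sub, inner_sub_left, inner_sub_right] at this
  linarith

theorem MaxMonotoneWrt.mem_of_mem_fitzpatrickEpigraph (hB : MaxMonotoneWrt T B) {x u : H}
    {r : ℝ} (hp : ((x, u), r) ∈ fitzpatrickEpigraph T B) (hr : r ≤ ⟪T x, u⟫) : u ∈ B x := by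
  refine hB.2 x u fun y v hv => ?_
  have := hp y v hv
  simp only [map_sub, inner_sub_left, inner_sub_right]
  linarith

theorem MaxMonotoneWrt.inner_le_of_mem_fitzpatrickEpigraph (hB : MaxMonotoneWrt T B)
    {x u : H} {r : ℝ} (hp : ((x, u), r) ∈ fitzpatrickEpigraph T B) : ⟪T x, u⟫ ≤ r := by
  by_contra! hlt
  have := hp x u (hB.mem_of_mem_fitzpatrickEpigraph hp hlt.le)
  linarith

theorem MaxMonotoneWrt.nonneg_of_mem_fitzpatrickEpigraph (hT : (T : H →ₗ[ℝ] H).IsSymmetric)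
    (hTpos : ∀ x, 0 ≤ ⟪T x, x⟫) (hB : MaxMonotoneWrt T B) {p : (H × H) × ℝ}
    (hp : p ∈ fitzpatrickEpigraph T B) : 0 ≤ p.2 + halfSqNormWrt T p.1 := by
  have := hB.inner_le_of_mem_fitzpatrickEpigraph hp
  have := inner_map_add_self hT p.1.1 p.1.2
  have := hTpos (p.1.1 + p.1.2)
  unfold halfSqNormWrt
  linarith

theorem MaxMonotoneWrt.nonpos_of_forall_le_inner (hB : MaxMonotoneWrt T B) {x u : H} {c : ℝ}
    (h : ∀ y v, v ∈ B y → c ≤ ⟪T (x - y), u - v⟫) : c ≤ 0 := by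
  by_contra! hc
  have := h x u (hB.2 x u fun y v hv => hc.le.trans (h y v hv))
  simp only [sub_self, map_zero, inner_zero_left] at this
  linarith

/-- The first-order condition at a minimizer, obtained by moving it towards the graph point
`((y, v), ⟪T y, v⟫)` inside the epigraph. -/
theorem MonotoneWrt.le_inner_of_isMinOn (hT : (T : H →ₗ[ℝ] H).IsSymmetric)
    (hB : MonotoneWrt T B) {x u : H} {r : ℝ} (hp : ((x, u), r) ∈ fitzpatrickEpigraph T B)
    (hmin : IsMinOn (fun p => p.2 + halfSqNormWrt T p.1) (fitzpatrickEpigraph T B) ((x, u), r))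
    {y v : H} (hv : v ∈ B y) :
    r + ⟪T x, x⟫ + ⟪T u, u⟫ + ⟪T x, u⟫ ≤ ⟪T (-u - y), -x - v⟫ := by
  have hderiv := nonneg_of_forall_mul_add_sq_mul_nonneg
    (L := ⟪T y, v⟫ - r + (⟪T y, y⟫ + ⟪T v, v⟫ - ⟪T x, x⟫ - ⟪T u, u⟫
      - ⟪T (x - y), x - y⟫ - ⟪T (u - v), u - v⟫) / 2)
    (Q := (⟪T (x - y), x - y⟫ + ⟪T (u - v), u - v⟫) / 2) fun t ht0 ht1 => by
    have hmem := convex_fitzpatrickEpigraph hp (hB.mem_fitzpatrickEpigraph hv)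
      (sub_nonneg.2 ht1) ht0.le (sub_add_cancel 1 t)
    have := hmin hmem
    simp only [mem_ofPred_eq, halfSqNormWrt, Prod.fst_add, Prod.snd_add, Prod.smul_fst,
      Prod.smul_snd, smul_eq_mul, inner_map_smul_add_smul_self hT (sub_add_cancel 1 t)] at this
    linarith
  simp only [map_sub, map_neg, inner_sub_left, inner_sub_right, inner_neg_left,
    inner_neg_right] at hderiv ⊢
  linarith [inner_map_comm hT x y, inner_map_comm hT u v, inner_map_comm hT u x,
    inner_map_comm hT y u, inner_map_comm hT x v]

theorem MaxMonotoneWrt.exists_neg_mem [CompleteSpace H] (hB : MaxMonotoneWrt T B)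
    (hT : (T : H →ₗ[ℝ] H).IsSymmetric) {c : ℝ} (hc : 0 < c)
    (hTc : ∀ x, c * ‖x‖ ^ 2 ≤ ⟪T x, x⟫) : ∃ p, -p ∈ B p := by
  have hTpos : ∀ x, 0 ≤ ⟪T x, x⟫ := fun x => (by positivity : 0 ≤ c * ‖x‖ ^ 2).trans (hTc x)
  obtain ⟨y₀, v₀, hv₀⟩ : ∃ y v, v ∈ B y := by
    by_contra! h
    exact h 0 0 (hB.2 0 0 fun y v hv => absurd hv (h y v))
  have hbdd : BddBelow ((fun p : (H × H) × ℝ => p.2 + halfSqNormWrt T p.1) ''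
      fitzpatrickEpigraph T B) := by
    refine ⟨0, ?_⟩
    rintro _ ⟨p, hp, rfl⟩
    exact hB.nonneg_of_mem_fitzpatrickEpigraph hT hTpos hp
  obtain ⟨⟨⟨x, u⟩, r⟩, hp, hmin⟩ := exists_isMinOn_snd_add_of_strongConvexOn (E := H × H)
    isClosed_fitzpatrickEpigraph convex_fitzpatrickEpigraph
    ⟨_, hB.1.mem_fitzpatrickEpigraph hv₀⟩ hc (strongConvexOn_halfSqNormWrt hT hc.le hTc)
    (by unfold halfSqNormWrt; fun_prop) hbdd
  have hle : r + ⟪T x, x⟫ + ⟪T u, u⟫ + ⟪T x, u⟫ ≤ 0 :=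
    hB.nonpos_of_forall_le_inner fun y v hv => hB.1.le_inner_of_isMinOn hT hp hmin hv
  have hxu := hB.inner_le_of_mem_fitzpatrickEpigraph hp
  have hu : u = -x := eq_neg_of_add_eq_zero_right <|
    eq_zero_of_inner_map_self_nonpos hc hTc <| by linarith [inner_map_add_self hT x u]
  subst hu
  refine ⟨x, hB.mem_of_mem_fitzpatrickEpigraph hp ?_⟩
  simp only [map_neg, inner_neg_left, inner_neg_right, neg_neg] at hle ⊢
  linarith

end Fitzpatrick

section Resolvent

variable {T : H →L[ℝ] H} {B : H → Set H}

theorem MaxMonotoneWrt.preimage_add_const (hB : MaxMonotoneWrt T B) (a : H) :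
    MaxMonotoneWrt T fun p => (· + a) ⁻¹' B p := by
  refine ⟨fun x y u v hu hv => ?_, fun x u h => hB.2 x (u + a) fun y v hv => ?_⟩
  · simpa only [add_sub_add_right_eq_sub] using hB.1 x y _ _ hu hv
  · simpa only [sub_sub_eq_add_sub] using h y (v - a) (by simpa using hv)

theorem MaxMonotoneWrt.exists_sub_mem [CompleteSpace H] (hB : MaxMonotoneWrt T B)
    (hT : (T : H →ₗ[ℝ] H).IsSymmetric) {c : ℝ} (hc : 0 < c)
    (hTc : ∀ x, c * ‖x‖ ^ 2 ≤ ⟪T x, x⟫) (x : H) : ∃ p, x - p ∈ B p := by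
  obtain ⟨p, hp⟩ := (hB.preimage_add_const x).exists_neg_mem hT hc hTc
  exact ⟨p, by simpa [neg_add_eq_sub] using hp⟩

theorem MonotoneWrt.eq_of_sub_mem (hB : MonotoneWrt T B) {c : ℝ} (hc : 0 < c)
    (hTc : ∀ x, c * ‖x‖ ^ 2 ≤ ⟪T x, x⟫) {x p q : H} (hp : x - p ∈ B p) (hq : x - q ∈ B q) :
    p = q := by
  have := hB p q _ _ hp hq
  rw [sub_sub_sub_cancel_left, ← neg_sub p q, inner_neg_right] at this
  exact sub_eq_zero.1 (eq_zero_of_inner_map_self_nonpos hc hTc (by linarith))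

theorem MaxMonotone.maxMonotoneWrt_preimage_smul {A : H → Set H} (hA : MaxMonotone A)
    (hT : (T : H →ₗ[ℝ] H).IsSymmetric) (hTs : Function.Surjective T) {γ : ℝ} (hγ : 0 < γ) :
    MaxMonotoneWrt T fun p => T ⁻¹' (γ • A p) := by
  have hmem : ∀ p w, w ∈ T ⁻¹' (γ • A p) ↔ γ⁻¹ • T w ∈ A p := fun p w =>
    mem_smul_set_iff_inv_smul_mem₀ hγ.ne' _ _
  have hscale : ∀ p q w w', ⟪T (p - q), w - w'⟫ = γ * ⟪p - q, γ⁻¹ • T w - γ⁻¹ • T w'⟫ := by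
    intro p q w w'
    rw [← smul_sub, real_inner_smul_right, ← mul_assoc, mul_inv_cancel₀ hγ.ne', one_mul,
      ← map_sub]
    exact hT _ _
  refine ⟨fun p q w w' hw hw' => ?_, fun p w h => (hmem p w).2 (hA.2 _ _ fun y a ha => ?_)⟩
  · rw [hscale]
    exact mul_nonneg hγ.le (hA.1 _ _ _ _ ((hmem p w).1 hw) ((hmem q w').1 hw'))
  · obtain ⟨w', hw'⟩ := hTs (γ • a)
    have := h y w' (by simpa [hw'] using smul_mem_smul_set ha)
    rw [hscale, hw', inv_smul_smul₀ hγ.ne'] at this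
    exact nonneg_of_mul_nonneg_right this hγ

end Resolvent

end InnerProductSpace

theorem stmt_13 {H : Type*} [NormedAddCommGroup H] [InnerProductSpace ℝ H] [CompleteSpace H]
    (α γ : ℝ) (hα : 0 < α) (hγ : 0 < γ)
    (W : H →L[ℝ] H) (hsa : IsSelfAdjoint W)
    (hlb : ∀ x : H, α * ‖x‖ ^ 2 ≤ (inner ℝ (W x) x : ℝ))
    (A : H → Set H) (hA : MaxMonotone A) :
    (∀ x : H, ∃! p : H, W x - W p ∈ γ • A p) ∧
    (∀ J : H → H, (∀ x, W x - W (J x) ∈ γ • A (J x)) →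
      ((∀ x : H, J x = x ↔ 0 ∈ A x) ∧
       ∀ (x y : H), 0 ∈ A y → (inner ℝ (W (y - J x)) (x - J x) : ℝ) ≤ 0)) := by
  have hW := hsa.isSymmetric
  have hB := hA.maxMonotoneWrt_preimage_smul hW (surjective_of_inner_map_self_coercive hα hlb) hγ
  have hres : ∀ x p, W x - W p ∈ γ • A p ↔ x - p ∈ W ⁻¹' (γ • A p) := by
    simp only [mem_preimage, map_sub, implies_true]
  have huniq : ∀ x p q, W x - W p ∈ γ • A p → W x - W q ∈ γ • A q → p = q :=
    fun x p q hp hq => hB.1.eq_of_sub_mem hα hlb ((hres x p).1 hp) ((hres x q).1 hq)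
  have hzero : ∀ y, 0 ∈ A y ↔ W y - W y ∈ γ • A y := fun y => by
    rw [sub_self, zero_mem_smul_set_iff hγ.ne']
  refine ⟨fun x => ?_, fun J hJ => ⟨fun x => ⟨fun hx => ?_, fun hx => ?_⟩, fun x y hy => ?_⟩⟩
  · obtain ⟨p, hp⟩ := hB.exists_sub_mem hW hα hlb x
    exact ⟨p, (hres x p).2 hp, fun q hq => huniq x q p hq ((hres x p).2 hp)⟩
  · exact (hzero x).2 (by simpa only [hx] using hJ x)
  · exact huniq x _ _ (hJ x) ((hzero x).1 hx)
  · have := hB.1 (J x) y (x - J x) (y - y) ((hres x _).1 (hJ x)) ((hres y y).1 ((hzero y).1 hy))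
    rw [sub_self, sub_zero, ← neg_sub, map_neg, inner_neg_left] at this
    linarith
end

section
/- In the setting of the variable metric quasi-cyclic algorithm xₙ₊₁ = xₙ + λₙ(T_{i(n),n} xₙ + aₙ − xₙ) (with T_{i,n} ∈ 𝔗(Wₙ), Fix T_{i,n} = Cᵢ, C = ⋂ Cᵢ ≠ ∅, λₙ ∈ [ε, 2−ε], ∑‖aₙ‖ < +∞, (1+ηₙ)Wₙ ≽ Wₙ₊₁ with (ηₙ) summable, α·Id ≼ Wₙ, sup‖Wₙ‖ < +∞, and the focusing condition), if additionally liminf_n d_C(xₙ) = 0, then (xₙ) converges strongly to a point of C. -/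
/-!
For `y ∈ C`, the distance `‖xₙ - y‖_{Wₙ}` is quasi-Fejér: a relaxed step of an operator in `𝔗(Wₙ)`
does not increase it, the error `aₙ` adds at most `2‖aₙ‖_{Wₙ}`, and passing to `Wₙ₊₁` multiplies
it by at most `√(1 + ηₙ) ≤ exp ηₙ`. Since all the metrics are uniformly equivalent to the norm,
this gives `‖xₘ - y‖ ≤ A ‖xₙ - y‖ + rₙ` for `n ≤ m`, with `rₙ → 0` independent of `y`. Taking `n`
with `xₙ` close to `C`, as `liminf d_C(xₙ) = 0` allows, traps the tail of `(xₙ)` near a single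
point of `C`; so `(xₙ)` is Cauchy and its limit lies in the closed set `C`.
-/

open Filter Topology
open scoped InnerProductSpace

section WeightedNorm

variable {H : Type*} [NormedAddCommGroup H] [InnerProductSpace ℝ H]

noncomputable def weightedNorm (W : H →L[ℝ] H) (v : H) : ℝ := √⟪W v, v⟫_ℝ

lemma weightedNorm_nonneg (W : H →L[ℝ] H) (v : H) : 0 ≤ weightedNorm W v := Real.sqrt_nonneg _

lemma ContinuousLinearMap.IsPositive.weightedNorm_sq {W : H →L[ℝ] H} (hW : W.IsPositive) (v : H) :
    weightedNorm W v ^ 2 = ⟪W v, v⟫_ℝ :=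
  Real.sq_sqrt (hW.inner_nonneg_left v)

lemma ContinuousLinearMap.IsPositive.inner_map_comm {W : H →L[ℝ] H} (hW : W.IsPositive)
    (u v : H) : ⟪W u, v⟫_ℝ = ⟪W v, u⟫_ℝ := by
  rw [hW.inner_left_eq_inner_right, real_inner_comm]

lemma ContinuousLinearMap.IsPositive.inner_le_weightedNorm_mul {W : H →L[ℝ] H} (hW : W.IsPositive)
    (u v : H) : ⟪W u, v⟫_ℝ ≤ weightedNorm W u * weightedNorm W v := by
  have hcs := LinearMap.BilinForm.apply_mul_apply_le_of_forall_zero_le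
    (innerₗ H ∘ₗ (W : H →ₗ[ℝ] H)) hW.inner_nonneg_left u v
  simp only [LinearMap.coe_comp, Function.comp_apply, ContinuousLinearMap.coe_coe,
    innerₗ_apply_apply, hW.inner_map_comm v u] at hcs
  rw [weightedNorm, weightedNorm, ← Real.sqrt_mul (hW.inner_nonneg_left u)]
  exact Real.le_sqrt_of_sq_le (by simpa [sq] using hcs)

lemma ContinuousLinearMap.IsPositive.inner_map_add_smul_self {W : H →L[ℝ] H} (hW : W.IsPositive)
    (u v : H) (c : ℝ) :
    ⟪W (u + c • v), u + c • v⟫_ℝ = ⟪W u, u⟫_ℝ + 2 * c * ⟪W u, v⟫_ℝ + c ^ 2 * ⟪W v, v⟫_ℝ := by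
  simp only [map_add, map_smul, inner_add_left, inner_add_right, real_inner_smul_left,
    real_inner_smul_right, hW.inner_map_comm v u]
  ring

lemma ContinuousLinearMap.IsPositive.weightedNorm_add_le {W : H →L[ℝ] H} (hW : W.IsPositive)
    (u v : H) : weightedNorm W (u + v) ≤ weightedNorm W u + weightedNorm W v := by
  have hexpand := hW.inner_map_add_smul_self u v 1
  rw [one_smul] at hexpand
  refine Real.sqrt_le_iff.2 ⟨add_nonneg (weightedNorm_nonneg W u) (weightedNorm_nonneg W v), ?_⟩
  rw [hexpand, add_sq, hW.weightedNorm_sq, hW.weightedNorm_sq]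
  linarith [hW.inner_le_weightedNorm_mul u v]

lemma weightedNorm_smul (W : H →L[ℝ] H) (c : ℝ) (v : H) :
    weightedNorm W (c • v) = |c| * weightedNorm W v := by
  rw [weightedNorm, weightedNorm, map_smul, real_inner_smul_left, real_inner_smul_right,
    ← mul_assoc, Real.sqrt_mul (mul_self_nonneg c), Real.sqrt_mul_self_eq_abs]

lemma weightedNorm_le_sqrt_opNorm_mul (W : H →L[ℝ] H) (v : H) :
    weightedNorm W v ≤ √‖W‖ * ‖v‖ := by
  have h : ⟪W v, v⟫_ℝ ≤ ‖W‖ * ‖v‖ ^ 2 :=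
    calc ⟪W v, v⟫_ℝ ≤ ‖W v‖ * ‖v‖ := real_inner_le_norm _ _
      _ ≤ ‖W‖ * ‖v‖ * ‖v‖ := by gcongr; exact W.le_opNorm v
      _ = ‖W‖ * ‖v‖ ^ 2 := by ring
  calc weightedNorm W v ≤ √(‖W‖ * ‖v‖ ^ 2) := Real.sqrt_le_sqrt h
    _ = √‖W‖ * ‖v‖ := by rw [Real.sqrt_mul (norm_nonneg W), Real.sqrt_sq (norm_nonneg v)]

lemma sqrt_mul_norm_le_weightedNorm {W : H →L[ℝ] H} {α : ℝ} (hα : 0 ≤ α) {v : H}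
    (h : α * ‖v‖ ^ 2 ≤ ⟪W v, v⟫_ℝ) : √α * ‖v‖ ≤ weightedNorm W v := by
  calc √α * ‖v‖ = √(α * ‖v‖ ^ 2) := by rw [Real.sqrt_mul hα, Real.sqrt_sq (norm_nonneg v)]
    _ ≤ weightedNorm W v := Real.sqrt_le_sqrt h

lemma weightedNorm_le_exp_mul_of_inner_le {W W' : H →L[ℝ] H} {η : ℝ} (hη : 0 ≤ η) {v : H}
    (h : ⟪W' v, v⟫_ℝ ≤ (1 + η) * ⟪W v, v⟫_ℝ) :
    weightedNorm W' v ≤ Real.exp η * weightedNorm W v := by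
  have hexp : √(1 + η) ≤ Real.exp η := by
    have := Real.add_one_le_exp η
    have := Real.one_le_exp hη
    exact Real.sqrt_le_iff.2 ⟨by positivity, by nlinarith⟩
  calc weightedNorm W' v ≤ √((1 + η) * ⟪W v, v⟫_ℝ) := Real.sqrt_le_sqrt h
    _ = √(1 + η) * weightedNorm W v := Real.sqrt_mul (by linarith) _
    _ ≤ Real.exp η * weightedNorm W v := by gcongr; exact weightedNorm_nonneg W v

lemma ContinuousLinearMap.IsPositive.weightedNorm_relaxed_step_le {W : H →L[ℝ] H}
    (hW : W.IsPositive) {u y z : H} (hy : ⟪W (y - z), u - z⟫_ℝ ≤ 0) {l : ℝ} (hl0 : 0 ≤ l)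
    (hl2 : l ≤ 2) : weightedNorm W (u + l • (z - u) - y) ≤ weightedNorm W (u - y) := by
  have hcross : ⟪W (u - y), z - u⟫_ℝ ≤ -⟪W (z - u), z - u⟫_ℝ := by
    have hsplit : ⟪W (u - y), z - u⟫_ℝ = -⟪W (z - u), z - u⟫_ℝ + ⟪W (y - z), u - z⟫_ℝ := by
      rw [show u - y = -(z - u) - (y - z) by abel, ← neg_sub u z]
      simp only [map_sub, map_neg, inner_sub_left, inner_neg_left, inner_neg_right]
      ring
    linarith
  have hexpand := hW.inner_map_add_smul_self (u - y) (z - u) l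
  rw [show u - y + l • (z - u) = u + l • (z - u) - y by abel] at hexpand
  refine Real.sqrt_le_sqrt ?_
  rw [hexpand]
  nlinarith [mul_le_mul_of_nonneg_left hcross hl0,
    mul_nonneg (mul_nonneg hl0 (sub_nonneg.2 hl2)) (hW.inner_nonneg_left (z - u))]

lemma ContinuousLinearMap.IsPositive.weightedNorm_perturbed_step_le {W W' : H →L[ℝ] H}
    (hW : W.IsPositive) {η : ℝ} (hη : 0 ≤ η) (hW' : ∀ v, ⟪W' v, v⟫_ℝ ≤ (1 + η) * ⟪W v, v⟫_ℝ)
    {u y z : H} (hy : ⟪W (y - z), u - z⟫_ℝ ≤ 0) {l : ℝ} (hl0 : 0 ≤ l) (hl2 : l ≤ 2) (e : H) :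
    weightedNorm W' (u + l • (z + e - u) - y)
      ≤ Real.exp η * (weightedNorm W (u - y) + 2 * weightedNorm W e) := by
  have hsplit : u + l • (z + e - u) - y = (u + l • (z - u) - y) + l • e := by
    simp only [smul_add, smul_sub]; abel
  calc weightedNorm W' (u + l • (z + e - u) - y)
      ≤ Real.exp η * weightedNorm W (u + l • (z + e - u) - y) :=
        weightedNorm_le_exp_mul_of_inner_le hη (hW' _)
    _ ≤ Real.exp η * (weightedNorm W (u - y) + 2 * weightedNorm W e) := by
        gcongr
        calc weightedNorm W (u + l • (z + e - u) - y)
            ≤ weightedNorm W (u + l • (z - u) - y) + weightedNorm W (l • e) := by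
              rw [hsplit]; exact hW.weightedNorm_add_le _ _
          _ ≤ weightedNorm W (u - y) + 2 * weightedNorm W e := by
              rw [weightedNorm_smul, abs_of_nonneg hl0]
              gcongr
              · exact hW.weightedNorm_relaxed_step_le hy hl0 hl2
              · exact weightedNorm_nonneg W e

end WeightedNorm

open Finset in
lemma le_exp_sum_mul_add_sum_of_le_exp_mul_add {φ η b : ℕ → ℝ} (hη : ∀ n, 0 ≤ η n)
    (hb : ∀ n, 0 ≤ b n) (h : ∀ n, φ (n + 1) ≤ Real.exp (η n) * (φ n + b n)) {n m : ℕ}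
    (hnm : n ≤ m) :
    φ m ≤ Real.exp (∑ k ∈ Ico n m, η k) * (φ n + ∑ k ∈ Ico n m, b k) := by
  induction m, hnm using Nat.le_induction with
  | base => simp
  | succ m hnm ih =>
    rw [sum_Ico_succ_top hnm, sum_Ico_succ_top hnm, Real.exp_add]
    have hE : 1 ≤ Real.exp (∑ k ∈ Ico n m, η k) := Real.one_le_exp (sum_nonneg fun k _ => hη k)
    calc φ (m + 1) ≤ Real.exp (η m) * (φ m + b m) := h m
      _ ≤ Real.exp (η m) * (Real.exp (∑ k ∈ Ico n m, η k) * (φ n + ∑ k ∈ Ico n m, b k)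
            + Real.exp (∑ k ∈ Ico n m, η k) * b m) := by
          gcongr
          exact le_mul_of_one_le_left (hb m) hE
      _ = _ := by ring

lemma le_exp_tsum_mul_add_tsum_of_le_exp_mul_add {φ η b : ℕ → ℝ} (hφ : ∀ n, 0 ≤ φ n)
    (hη0 : ∀ n, 0 ≤ η n) (hη : Summable η) (hb0 : ∀ n, 0 ≤ b n) (hb : Summable b)
    (h : ∀ n, φ (n + 1) ≤ Real.exp (η n) * (φ n + b n)) {n m : ℕ} (hnm : n ≤ m) :
    φ m ≤ Real.exp (∑' k, η k) * (φ n + ∑' k, b (k + n)) := by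
  have hηle : ∑ k ∈ Finset.Ico n m, η k ≤ ∑' k, η k :=
    hη.sum_le_tsum _ fun k _ => hη0 k
  have hble : ∑ k ∈ Finset.Ico n m, b k ≤ ∑' k, b (k + n) := by
    simp only [Finset.sum_Ico_eq_sum_range, add_comm n]
    exact ((summable_nat_add_iff n).2 hb).sum_le_tsum _ fun k _ => hb0 _
  calc φ m ≤ Real.exp (∑ k ∈ Finset.Ico n m, η k) * (φ n + ∑ k ∈ Finset.Ico n m, b k) :=
        le_exp_sum_mul_add_sum_of_le_exp_mul_add hη0 hb0 h hnm
    _ ≤ Real.exp (∑' k, η k) * (φ n + ∑' k, b (k + n)) := by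
        gcongr
        exact add_nonneg (hφ n) (Finset.sum_nonneg fun k _ => hb0 k)

lemma dist_le_of_weightedNorm_succ_le {H : Type*} [NormedAddCommGroup H] [InnerProductSpace ℝ H]
    {W : ℕ → H →L[ℝ] H} {α μ : ℝ} (hα : 0 < α) (hlb : ∀ n v, α * ‖v‖ ^ 2 ≤ ⟪W n v, v⟫_ℝ)
    (hμ : ∀ n, ‖W n‖ ≤ μ) {η b : ℕ → ℝ} (hη0 : ∀ n, 0 ≤ η n) (hη : Summable η)
    (hb0 : ∀ n, 0 ≤ b n) (hb : Summable b) {x : ℕ → H} {y : H}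
    (hstep : ∀ n, weightedNorm (W (n + 1)) (x (n + 1) - y)
      ≤ Real.exp (η n) * (weightedNorm (W n) (x n - y) + b n)) {n m : ℕ} (hnm : n ≤ m) :
    dist (x m) y ≤ Real.exp (∑' k, η k) / √α * √μ * dist (x n) y
      + Real.exp (∑' k, η k) / √α * ∑' k, b (k + n) := by
  rw [dist_eq_norm, dist_eq_norm]
  calc ‖x m - y‖ ≤ weightedNorm (W m) (x m - y) / √α :=
        (le_div_iff₀' (Real.sqrt_pos.2 hα)).2 (sqrt_mul_norm_le_weightedNorm hα.le (hlb m _))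
    _ ≤ Real.exp (∑' k, η k) * (weightedNorm (W n) (x n - y) + ∑' k, b (k + n)) / √α := by
        gcongr
        exact le_exp_tsum_mul_add_tsum_of_le_exp_mul_add
          (φ := fun n => weightedNorm (W n) (x n - y)) (fun _ => weightedNorm_nonneg _ _) hη0 hη hb0 hb hstep hnm
    _ ≤ Real.exp (∑' k, η k) * (√μ * ‖x n - y‖ + ∑' k, b (k + n)) / √α := by
        gcongr
        exact (weightedNorm_le_sqrt_opNorm_mul _ _).trans (by gcongr; exact hμ n)
    _ = _ := by ring

section Metric

variable {X : Type*} [MetricSpace X]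

lemma exists_mem_tendsto_of_forall_eventually_dist_lt [CompleteSpace X] {S : Set X}
    (hS : IsClosed S) {x : ℕ → X} (h : ∀ t > 0, ∃ y ∈ S, ∀ᶠ m in atTop, dist (x m) y < t) :
    ∃ x' ∈ S, Tendsto x atTop (𝓝 x') := by
  have hcauchy : CauchySeq x := by
    refine Metric.cauchySeq_iff'.2 fun t ht => ?_
    obtain ⟨y, -, hy⟩ := h (t / 2) (half_pos ht)
    obtain ⟨N, hN⟩ := eventually_atTop.1 hy
    refine ⟨N, fun m hm => ?_⟩
    calc dist (x m) (x N) ≤ dist (x m) y + dist (x N) y := dist_triangle_right _ _ _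
      _ < t / 2 + t / 2 := add_lt_add (hN m hm) (hN N le_rfl)
      _ = t := add_halves t
  obtain ⟨x', hx'⟩ := cauchySeq_tendsto_of_complete hcauchy
  refine ⟨x', ?_, hx'⟩
  rw [← hS.closure_eq, Metric.mem_closure_iff]
  intro t ht
  obtain ⟨y, hyS, hy⟩ := h (t / 2) (half_pos ht)
  have hle : dist x' y ≤ t / 2 :=
    le_of_tendsto (hx'.dist tendsto_const_nhds) (hy.mono fun m hm => hm.le)
  exact ⟨y, hyS, hle.trans_lt (half_lt_self ht)⟩

lemma forall_exists_mem_eventually_dist_lt_of_liminf_infDist_eq_zero {S : Set X}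
    (hS : S.Nonempty) {x : ℕ → X} {A : ℝ} {r : ℕ → ℝ} (hr : Tendsto r atTop (𝓝 0))
    (hquasiFejer : ∀ y ∈ S, ∀ n m, n ≤ m → dist (x m) y ≤ A * dist (x n) y + r n)
    (hliminf : liminf (fun n => Metric.infDist (x n) S) atTop = 0) :
    ∀ t > 0, ∃ y ∈ S, ∀ᶠ m in atTop, dist (x m) y < t := by
  intro t ht
  obtain ⟨y₀, hy₀⟩ := hS
  -- without this bound the `liminf` would be a junk value
  have hbdd : IsCoboundedUnder (· ≥ ·) atTop (fun n => Metric.infDist (x n) S) :=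
    isCoboundedUnder_ge_of_le atTop fun m =>
      (Metric.infDist_le_dist_of_mem hy₀).trans (hquasiFejer y₀ hy₀ 0 m m.zero_le)
  set s := t / (2 * (|A| + 1)) with hs
  have hspos : 0 < s := by positivity
  have hfreq : ∃ᶠ n in atTop, Metric.infDist (x n) S < s :=
    frequently_lt_of_liminf_lt hbdd (hliminf ▸ hspos)
  obtain ⟨n, hn, hrn⟩ :=
    (hfreq.and_eventually (hr.eventually (gt_mem_nhds (half_pos ht)))).exists
  obtain ⟨y, hyS, hy⟩ := (Metric.infDist_lt_iff ⟨y₀, hy₀⟩).1 hn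
  refine ⟨y, hyS, eventually_atTop.2 ⟨n, fun m hm => ?_⟩⟩
  have hAs : A * dist (x n) y ≤ t / 2 := by
    calc A * dist (x n) y ≤ |A| * dist (x n) y := by gcongr; exact le_abs_self A
      _ ≤ (|A| + 1) * s := by gcongr; linarith
      _ = t / 2 := by rw [hs]; field_simp
  linarith [hquasiFejer y hyS n m hm]

end Metric

theorem stmt_16_general {H : Type*} [NormedAddCommGroup H] [InnerProductSpace ℝ H] [CompleteSpace H]
    {I : Type*}
    (α : ℝ) (hα : 0 < α)
    (C : I → Set H) (hCcl : ∀ i, IsClosed (C i))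
    (hC : (⋂ i, C i).Nonempty)
    (a : ℕ → H) (ha : Summable (fun n => ‖a n‖))
    (η : ℕ → ℝ) (hη0 : ∀ n, 0 ≤ η n) (hη : Summable η)
    (W : ℕ → H →L[ℝ] H) (hsa : ∀ n, IsSelfAdjoint (W n))
    (hlb : ∀ n (x : H), α * ‖x‖ ^ 2 ≤ (inner ℝ (W n x) x : ℝ))
    (hbd : ∃ μ : ℝ, ∀ n, ‖W n‖ ≤ μ)
    (hmono : ∀ n (x : H), (inner ℝ (W (n + 1) x) x : ℝ) ≤ (1 + η n) * (inner ℝ (W n x) x : ℝ))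
    (idx : ℕ → I)
    (T : I → ℕ → H → H)
    (hT : ∀ i n (x y : H), y ∈ C i → (inner ℝ (W n (y - T i n x)) (x - T i n x) : ℝ) ≤ 0)
    (ε : ℝ) (hε0 : 0 < ε)
    (x : ℕ → H) (lam : ℕ → ℝ) (hlam : ∀ n, lam n ∈ Set.Icc ε (2 - ε))
    (hrec : ∀ n, x (n + 1) = x n + lam n • (T (idx n) n (x n) + a n - x n))
    (hliminf : Filter.liminf (fun n => Metric.infDist (x n) (⋂ i, C i)) atTop = 0) :
    ∃ x' ∈ ⋂ i, C i, Tendsto x atTop (𝓝 x') := by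
  obtain ⟨μ, hμ⟩ := hbd
  have hW : ∀ n, (W n).IsPositive := fun n =>
    ⟨(hsa n).isSymmetric, fun v => by
      rw [ContinuousLinearMap.reApplyInnerSelf_apply, RCLike.re_to_real]
      exact (by positivity : 0 ≤ α * ‖v‖ ^ 2).trans (hlb n v)⟩
  set b : ℕ → ℝ := fun n => 2 * weightedNorm (W n) (a n)
  have hb0 : ∀ n, 0 ≤ b n := fun n => mul_nonneg zero_le_two (weightedNorm_nonneg _ _)
  have hb : Summable b := by
    refine (ha.mul_left (2 * √μ)).of_nonneg_of_le hb0 fun n => ?_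
    calc 2 * weightedNorm (W n) (a n) ≤ 2 * (√‖W n‖ * ‖a n‖) := by
          gcongr; exact weightedNorm_le_sqrt_opNorm_mul _ _
      _ ≤ 2 * √μ * ‖a n‖ := by rw [← mul_assoc]; gcongr; exact hμ n
  have hstep : ∀ y ∈ ⋂ i, C i, ∀ n, weightedNorm (W (n + 1)) (x (n + 1) - y)
      ≤ Real.exp (η n) * (weightedNorm (W n) (x n - y) + b n) := by
    intro y hy n
    rw [hrec n]
    exact (hW n).weightedNorm_perturbed_step_le (hη0 n) (hmono n)
      (hT _ n _ y (Set.mem_iInter.1 hy _)) (hε0.le.trans (hlam n).1) (by linarith [(hlam n).2])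
      (a n)
  refine exists_mem_tendsto_of_forall_eventually_dist_lt (isClosed_iInter hCcl)
    (forall_exists_mem_eventually_dist_lt_of_liminf_infDist_eq_zero hC ?_
      (fun y hy n m hnm => dist_le_of_weightedNorm_succ_le hα hlb hμ hη0 hη hb0 hb
        (hstep y hy) hnm) hliminf)
  simpa using (tendsto_sum_nat_add b).const_mul (Real.exp (∑' k, η k) / √α)

theorem stmt_16 {H : Type*} [NormedAddCommGroup H] [InnerProductSpace ℝ H] [CompleteSpace H]
    {I : Type*} [Fintype I] [Nonempty I]
    (α : ℝ) (hα : 0 < α)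
    (C : I → Set H) (hCcl : ∀ i, IsClosed (C i)) (hCconv : ∀ i, Convex ℝ (C i))
    (hC : (⋂ i, C i).Nonempty)
    (a : ℕ → H) (ha : Summable (fun n => ‖a n‖))
    (η : ℕ → ℝ) (hη0 : ∀ n, 0 ≤ η n) (hη : Summable η)
    (W : ℕ → H →L[ℝ] H) (hsa : ∀ n, IsSelfAdjoint (W n))
    (hlb : ∀ n (x : H), α * ‖x‖ ^ 2 ≤ (inner ℝ (W n x) x : ℝ))
    (hbd : ∃ μ : ℝ, ∀ n, ‖W n‖ ≤ μ)
    (hmono : ∀ n (x : H), (inner ℝ (W (n + 1) x) x : ℝ) ≤ (1 + η n) * (inner ℝ (W n x) x : ℝ))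
    (idx : ℕ → I)
    (hidx : ∀ j : I, ∃ M : ℕ, 0 < M ∧ ∀ n : ℕ, ∃ k < M, idx (n + k) = j)
    (T : I → ℕ → H → H)
    (hT : ∀ i n (x y : H), y ∈ C i → (inner ℝ (W n (y - T i n x)) (x - T i n x) : ℝ) ≤ 0)
    (hTfix : ∀ i n (x : H), T i n x = x ↔ x ∈ C i)
    (ε : ℝ) (hε0 : 0 < ε) (hε1 : ε < 1)
    (x : ℕ → H) (lam : ℕ → ℝ) (hlam : ∀ n, lam n ∈ Set.Icc ε (2 - ε))
    (hrec : ∀ n, x (n + 1) = x n + lam n • (T (idx n) n (x n) + a n - x n))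
    (hfocus : ∀ (p : ℕ → ℕ), StrictMono p → ∀ (x' : H) (j : I),
      (∀ y : H, Tendsto (fun n => (inner ℝ (x (p n)) y : ℝ)) atTop (𝓝 (inner ℝ x' y : ℝ))) →
      Tendsto (fun n => T j (p n) (x (p n)) - x (p n)) atTop (𝓝 0) →
      (∀ n, idx (p n) = j) → x' ∈ C j)
    (hliminf : Filter.liminf (fun n => Metric.infDist (x n) (⋂ i, C i)) atTop = 0) :
    ∃ x' ∈ ⋂ i, C i, Tendsto x atTop (𝓝 x') :=
  stmt_16_general α hα C hCcl hC a ha η hη0 hη W hsa hlb hbd hmono idx T hT ε hε0 x lam hlam hrec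
    hliminf
end
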